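/- arXiv:2007.06931 — 8 statements merged into one kernel-verified Lean document; each statement's English description precedes it below -/
import Mathlib

section
/- Let P be the transition matrix of an ergodic Markov chain on a finite state space with stationary distribution π, and suppose that for every probability distribution ζ one has H(ζP | π) ≤ (1−δ)·H(ζ | π) for some δ > 0, where H denotes relative entropy (KL divergence). Then the total variation mixing time of P satisfies T_mix(P) ≤ 1 + δ⁻¹·(log 8 + log log(1/π_*)), where π_* = min_σ π(σ). -/
open scoped Classical BigOperators

noncomputable def ent {Ω : Type*} [Fintype Ω] (π f : Ω → ℝ) : ℝ :=
  (∑ x, π x * f x * Real.log (f x)) - (∑ x, π x * f x) * Real.log (∑ x, π x * f x)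

noncomputable def condMean {Ω α : Type*} [Fintype Ω] (ν : Ω → ℝ) (g : Ω → α)
    (f : Ω → ℝ) (x : Ω) : ℝ :=
  (∑ y, if g y = g x then ν y * f y else 0) / (∑ y, if g y = g x then ν y else 0)

noncomputable def avgCondEnt {Ω α : Type*} [Fintype Ω] (ν : Ω → ℝ) (g : Ω → α)
    (f : Ω → ℝ) : ℝ :=
  ∑ x, ν x * f x * (Real.log (f x) - Real.log (condMean ν g f x))

noncomputable def matMulVec {Ω : Type*} [Fintype Ω] (P : Ω → Ω → ℝ) (f : Ω → ℝ) (x : Ω) : ℝ :=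
  ∑ y, P x y * f y

noncomputable def dirForm {Ω : Type*} [Fintype Ω] (π : Ω → ℝ) (P : Ω → Ω → ℝ)
    (f g : Ω → ℝ) : ℝ :=
  ∑ x, π x * f x * (g x - matMulVec P g x)

noncomputable def stepDist {Ω : Type*} [Fintype Ω] (P : Ω → Ω → ℝ) (ζ : Ω → ℝ) (y : Ω) : ℝ :=
  ∑ x, ζ x * P x y

noncomputable def adjointMat {Ω : Type*} [Fintype Ω] (π : Ω → ℝ) (P : Ω → Ω → ℝ)
    (x y : Ω) : ℝ :=
  π y * P y x / π x

noncomputable def matComp {Ω : Type*} [Fintype Ω] (P Q : Ω → Ω → ℝ) (x y : Ω) : ℝ :=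
  ∑ z, P x z * Q z y

noncomputable def relEnt {Ω : Type*} [Fintype Ω] (π ζ : Ω → ℝ) : ℝ :=
  ∑ x, ζ x * Real.log (ζ x / π x)

noncomputable def tvDist {Ω : Type*} [Fintype Ω] (μ ν : Ω → ℝ) : ℝ :=
  (1 / 2) * ∑ x, |μ x - ν x|

/-!
Iterating the contraction from a point mass at `x₀` gives
`H(δ_{x₀} Pᵗ | π) ≤ e^{-δt} H(δ_{x₀} | π) = e^{-δt} log (1/π(x₀)) ≤ e^{-δt} log (1/π_*)`,
which is at most `1/8` for `t` beyond the stated bound. Pinsker's inequality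
`‖ζ - π‖²_TV ≤ H(ζ | π) / 2` then gives `‖δ_{x₀} Pᵗ - π‖_TV ≤ 1/4`.
Pinsker's inequality itself is Cauchy–Schwarz combined with the pointwise bound
`3 (r - 1)² ≤ 2 (r + 2) (r log r + 1 - r)`.
-/

open Finset InformationTheory

def IsProbVec {Ω : Type*} [Fintype Ω] (ζ : Ω → ℝ) : Prop :=
  (∀ x, 0 ≤ ζ x) ∧ ∑ x, ζ x = 1

-- The pointwise Pinsker bound divided by `r`: in this form the derivative has the sign of `r - 1`.
theorem sub_one_mul_five_mul_add_one_div_le_log {r : ℝ} (hr : 0 < r) :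
    (r - 1) * (5 * r + 1) / (2 * r * (r + 2)) ≤ Real.log r := by
  set k : ℝ → ℝ := fun x => Real.log x - (x - 1) * (5 * x + 1) / (2 * x * (x + 2))
  have hk : ∀ x, 0 < x → HasDerivAt k ((x - 1) ^ 3 / (x ^ 2 * (x + 2) ^ 2)) x := by
    intro x hx
    have hnum : HasDerivAt (fun y : ℝ => (y - 1) * (5 * y + 1)) (10 * x - 4) x :=
      (((hasDerivAt_id' x).sub_const 1).mul
        (((hasDerivAt_id' x).const_mul 5).add_const 1)).congr_deriv (by ring)
    have hden : HasDerivAt (fun y : ℝ => 2 * y * (y + 2)) (4 * x + 4) x :=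
      (((hasDerivAt_id' x).const_mul 2).mul ((hasDerivAt_id' x).add_const 2)).congr_deriv
        (by ring)
    refine ((Real.hasDerivAt_log hx.ne').sub (hnum.div hden (by positivity))).congr_deriv ?_
    field_simp
    ring
  have hmin : IsMinOn k (Set.Ioi 0) 1 := by
    refine isMinOn_Ioi_of_deriv (hk 1 one_pos).continuousAt
      (fun x hx => (hk x hx.1).differentiableAt.differentiableWithinAt)
      (fun x hx => (hk x (one_pos.trans hx)).differentiableAt.differentiableWithinAt)
      (fun x hx => ?_) (fun x hx => ?_)
    · rw [(hk x hx.1).deriv]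
      have : (x - 1) ^ 3 ≤ 0 := Odd.pow_nonpos (by decide) (by linarith [hx.2])
      exact div_nonpos_of_nonpos_of_nonneg this (by positivity)
    · rw [(hk x (one_pos.trans hx)).deriv]
      have : 0 ≤ (x - 1) ^ 3 := pow_nonneg (by linarith [Set.mem_Ioi.mp hx]) 3
      positivity
  have hkr := hmin (Set.mem_Ioi.mpr hr)
  simp only [k, Set.mem_ofPred_eq, Real.log_one, sub_self, zero_mul, zero_div] at hkr
  linarith

theorem three_mul_sq_sub_one_le_mul_klFun {r : ℝ} (hr : 0 ≤ r) :
    3 * (r - 1) ^ 2 ≤ 2 * (r + 2) * klFun r := by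
  rcases hr.eq_or_lt with rfl | hr
  · norm_num [klFun_zero]
  · have h := sub_one_mul_five_mul_add_one_div_le_log hr
    rw [div_le_iff₀ (by positivity)] at h
    rw [klFun_apply]
    linear_combination h

theorem relEnt_eq_sum_mul_klFun {Ω : Type*} [Fintype Ω] {π ζ : Ω → ℝ} (hπ : ∀ x, 0 < π x)
    (hsum : ∑ x, ζ x = ∑ x, π x) :
    relEnt π ζ = ∑ x, π x * klFun (ζ x / π x) := by
  have h : ∀ x, π x * klFun (ζ x / π x) = ζ x * Real.log (ζ x / π x) + (π x - ζ x) := by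
    intro x
    rw [klFun_apply]
    field_simp [(hπ x).ne']
    ring
  rw [sum_congr rfl fun x _ => h x, sum_add_distrib, sum_sub_distrib, hsum, sub_self, add_zero,
    relEnt]

theorem relEnt_nonneg {Ω : Type*} [Fintype Ω] {π ζ : Ω → ℝ} (hπ : ∀ x, 0 < π x)
    (hζ : ∀ x, 0 ≤ ζ x) (hsum : ∑ x, ζ x = ∑ x, π x) : 0 ≤ relEnt π ζ := by
  rw [relEnt_eq_sum_mul_klFun hπ hsum]
  exact sum_nonneg fun x _ => mul_nonneg (hπ x).le (klFun_nonneg (div_nonneg (hζ x) (hπ x).le))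

theorem tvDist_sq_le_relEnt_div_two {Ω : Type*} [Fintype Ω] {π ζ : Ω → ℝ}
    (hπ0 : ∀ x, 0 < π x) (hπ1 : ∑ x, π x = 1) (hζ : IsProbVec ζ) :
    tvDist ζ π ^ 2 ≤ relEnt π ζ / 2 := by
  have hsum : ∑ x, ζ x = ∑ x, π x := by rw [hζ.2, hπ1]
  have hpoint : ∀ x, |ζ x - π x| ^ 2 ≤ (ζ x + 2 * π x) / 3 * (2 * (π x * klFun (ζ x / π x))) := by
    intro x
    set r := ζ x / π x
    have h : 3 * (r - 1) ^ 2 ≤ 2 * (r + 2) * klFun r :=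
      three_mul_sq_sub_one_le_mul_klFun (div_nonneg (hζ.1 x) (hπ0 x).le)
    have hζx : ζ x = π x * r := (mul_div_cancel₀ _ (hπ0 x).ne').symm
    rw [sq_abs, hζx]
    linear_combination (π x ^ 2 / 3) * h
  have hcs := sum_sq_le_sum_mul_sum_of_sq_le_mul univ
    (fun x _ => div_nonneg (add_nonneg (hζ.1 x) (mul_nonneg zero_le_two (hπ0 x).le)) zero_le_three)
    (fun x _ => mul_nonneg zero_le_two
      (mul_nonneg (hπ0 x).le (klFun_nonneg (div_nonneg (hζ.1 x) (hπ0 x).le))))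
    (fun x _ => hpoint x)
  rw [← sum_div, sum_add_distrib, ← mul_sum, ← mul_sum, ← relEnt_eq_sum_mul_klFun hπ0 hsum,
    hζ.2, hπ1] at hcs
  rw [tvDist]
  linarith

theorem isProbVec_indicator {Ω : Type*} [Fintype Ω] [DecidableEq Ω] (x₀ : Ω) :
    IsProbVec (fun x => if x = x₀ then (1 : ℝ) else 0) :=
  ⟨fun _ => ite_nonneg zero_le_one le_rfl, by simp⟩

theorem relEnt_indicator {Ω : Type*} [Fintype Ω] [DecidableEq Ω] (π : Ω → ℝ) (x₀ : Ω) :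
    relEnt π (fun x => if x = x₀ then 1 else 0) = Real.log (1 / π x₀) := by
  rw [relEnt, sum_eq_single x₀ (fun x _ hx => by simp [hx]) (by simp)]
  simp

theorem le_exp_neg_mul_of_le_one_sub_mul {a : ℕ → ℝ} {δ : ℝ} (ha : ∀ n, 0 ≤ a n)
    (hstep : ∀ n, a (n + 1) ≤ (1 - δ) * a n) (n : ℕ) :
    a n ≤ Real.exp (-(δ * n)) * a 0 := by
  induction n with
  | zero => simp
  | succ n ih =>
    calc a (n + 1) ≤ (1 - δ) * a n := hstep n
      _ ≤ Real.exp (-δ) * a n := by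
        gcongr
        · exact ha n
        · linarith [Real.add_one_le_exp (-δ)]
      _ ≤ Real.exp (-δ) * (Real.exp (-(δ * n)) * a 0) := by gcongr
      _ = Real.exp (-(δ * (n + 1 : ℕ))) * a 0 := by
        rw [← mul_assoc, ← Real.exp_add]; push_cast; ring_nf

section MarkovChain

variable {Ω : Type*} [Fintype Ω] {P : Ω → Ω → ℝ}

theorem isProbVec_stepDist (hP0 : ∀ x y, 0 ≤ P x y) (hP1 : ∀ x, ∑ y, P x y = 1)
    {ζ : Ω → ℝ} (hζ : IsProbVec ζ) : IsProbVec (stepDist P ζ) := by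
  refine ⟨fun y => sum_nonneg fun x _ => mul_nonneg (hζ.1 x) (hP0 x y), ?_⟩
  simp only [stepDist]
  rw [sum_comm]
  simp only [← mul_sum, hP1, mul_one, hζ.2]

theorem isProbVec_iterate_stepDist (hP0 : ∀ x y, 0 ≤ P x y) (hP1 : ∀ x, ∑ y, P x y = 1)
    {ζ : Ω → ℝ} (hζ : IsProbVec ζ) (n : ℕ) : IsProbVec ((stepDist P)^[n] ζ) := by
  induction n with
  | zero => exact hζ
  | succ n ih => rw [Function.iterate_succ_apply']; exact isProbVec_stepDist hP0 hP1 ih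

theorem relEnt_iterate_stepDist_le {π : Ω → ℝ} {δ : ℝ}
    (hP0 : ∀ x y, 0 ≤ P x y) (hP1 : ∀ x, ∑ y, P x y = 1)
    (hπ0 : ∀ x, 0 < π x) (hπ1 : ∑ x, π x = 1)
    (hdecay : ∀ ζ : Ω → ℝ, IsProbVec ζ → relEnt π (stepDist P ζ) ≤ (1 - δ) * relEnt π ζ)
    {ζ : Ω → ℝ} (hζ : IsProbVec ζ) (n : ℕ) :
    relEnt π ((stepDist P)^[n] ζ) ≤ Real.exp (-(δ * n)) * relEnt π ζ := by
  refine le_exp_neg_mul_of_le_one_sub_mul (a := fun n => relEnt π ((stepDist P)^[n] ζ))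
    (fun n => ?_) (fun n => ?_) n
  · have hn := isProbVec_iterate_stepDist hP0 hP1 hζ n
    exact relEnt_nonneg hπ0 hn.1 (by rw [hn.2, hπ1])
  · simpa only [Function.iterate_succ_apply'] using
      hdecay _ (isProbVec_iterate_stepDist hP0 hP1 hζ n)

end MarkovChain

theorem exp_neg_mul_mul_le_inv {δ t c M : ℝ} (hδ : 0 < δ) (hc : 0 < c) (hM : 0 ≤ M)
    (ht : δ⁻¹ * (Real.log c + Real.log M) ≤ t) : Real.exp (-(δ * t)) * M ≤ c⁻¹ := by
  rcases hM.eq_or_lt with rfl | hM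
  · simpa using hc.le
  have hlog : Real.log (c * M) ≤ δ * t := by
    rw [Real.log_mul hc.ne' hM.ne']
    rwa [inv_mul_le_iff₀ hδ] at ht
  calc Real.exp (-(δ * t)) * M ≤ Real.exp (-Real.log (c * M)) * M := by gcongr
    _ = c⁻¹ := by rw [Real.exp_neg, Real.exp_log (by positivity)]; field_simp

theorem stmt0_general {Ω : Type*} [Fintype Ω] [Nonempty Ω] [DecidableEq Ω]
    (P : Ω → Ω → ℝ) (π : Ω → ℝ) (δ : ℝ)
    (hP0 : ∀ x y, 0 ≤ P x y) (hP1 : ∀ x, ∑ y, P x y = 1)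
    (hπ0 : ∀ x, 0 < π x) (hπ1 : ∑ x, π x = 1)
    (hδ : 0 < δ)
    (hdecay : ∀ ζ : Ω → ℝ, (∀ x, 0 ≤ ζ x) → (∑ x, ζ x = 1) →
      relEnt π (stepDist P ζ) ≤ (1 - δ) * relEnt π ζ) :
    ∀ t : ℕ,
      1 + δ⁻¹ * (Real.log 8 +
          Real.log (Real.log (1 / (Finset.univ.inf' Finset.univ_nonempty π)))) ≤ (t : ℝ) →
      ∀ x0 : Ω,
        tvDist ((stepDist P)^[t] (fun x => if x = x0 then 1 else 0)) π ≤ 1 / 4 := by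
  intro t ht x0
  set πmin := univ.inf' univ_nonempty π
  set ζ₀ : Ω → ℝ := fun x => if x = x0 then 1 else 0
  have hζ₀ : IsProbVec ζ₀ := isProbVec_indicator x0
  have hπmin : 0 < πmin := (lt_inf'_iff _).2 fun x _ => hπ0 x
  have hH₀ : relEnt π ζ₀ ≤ Real.log (1 / πmin) := by
    rw [relEnt_indicator]
    exact Real.log_le_log (by simpa using hπ0 x0)
      (one_div_le_one_div_of_le hπmin (inf'_le _ (mem_univ x0)))
  have hHt : relEnt π ((stepDist P)^[t] ζ₀) ≤ Real.exp (-(δ * t)) * Real.log (1 / πmin) :=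
    (relEnt_iterate_stepDist_le hP0 hP1 hπ0 hπ1 (fun ζ hζ => hdecay ζ hζ.1 hζ.2) hζ₀ t).trans
      (by gcongr)
  have hsmall : Real.exp (-(δ * t)) * Real.log (1 / πmin) ≤ 8⁻¹ :=
    exp_neg_mul_mul_le_inv hδ (by norm_num)
      ((relEnt_nonneg hπ0 hζ₀.1 (by rw [hζ₀.2, hπ1])).trans hH₀) (by linarith)
  have hpinsker := tvDist_sq_le_relEnt_div_two hπ0 hπ1 (isProbVec_iterate_stepDist hP0 hP1 hζ₀ t)
  have htv : tvDist ((stepDist P)^[t] ζ₀) π ^ 2 ≤ (1 / 4) ^ 2 := by linarith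
  exact (abs_le_of_sq_le_sq' htv (by norm_num)).2

/-- If the chain contracts relative entropy at rate `δ` in each step, then its
total-variation mixing time is at most `1 + δ⁻¹ (log 8 + log log (1/π_*))`. -/
theorem stmt0 {Ω : Type*} [Fintype Ω] [Nonempty Ω] [DecidableEq Ω]
    (P : Ω → Ω → ℝ) (π : Ω → ℝ) (δ : ℝ)
    (hP0 : ∀ x y, 0 ≤ P x y) (hP1 : ∀ x, ∑ y, P x y = 1)
    (hπ0 : ∀ x, 0 < π x) (hπ1 : ∑ x, π x = 1)
    (hstat : ∀ y, ∑ x, π x * P x y = π y)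
    (hδ : 0 < δ)
    (hdecay : ∀ ζ : Ω → ℝ, (∀ x, 0 ≤ ζ x) → (∑ x, ζ x = 1) →
      relEnt π (stepDist P ζ) ≤ (1 - δ) * relEnt π ζ) :
    ∀ t : ℕ,
      1 + δ⁻¹ * (Real.log 8 +
          Real.log (Real.log (1 / (Finset.univ.inf' Finset.univ_nonempty π)))) ≤ (t : ℝ) →
      ∀ x0 : Ω,
        tvDist ((stepDist P)^[t] (fun x => if x = x0 then 1 else 0)) π ≤ 1 / 4 :=
  stmt0_general P π δ hP0 hP1 hπ0 hπ1 hδ hdecay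
end

section
/- Let S be an idempotent stochastic matrix (S² = S) reversible with respect to π on a finite state space, and let S̃ = (S+I)/2. Then for every nonnegative function f, Ent_π(Sf) ≤ Ent_π(S̃f). -/
open scoped Classical BigOperators

lemma ent_mono {Ω : Type*} [Fintype Ω]
    (S : Ω → Ω → ℝ) (π : Ω → ℝ)
    (hS0 : ∀ x y, 0 ≤ S x y) (hS1 : ∀ x, ∑ y, S x y = 1)
    (hπ0 : ∀ x, 0 ≤ π x)
    (hrev : ∀ x y, π x * S x y = π y * S y x)
    (g : Ω → ℝ) (hg : ∀ x, 0 ≤ g x) :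
    ent π (matMulVec S g) ≤ ent π g := by
  have hinv : ∀ y, ∑ x, π x * S x y = π y := by
    intro y
    simp_rw [hrev _ y, ← Finset.mul_sum, hS1, mul_one]
  have hmean : ∑ x, π x * matMulVec S g x = ∑ x, π x * g x := by
    simp_rw [matMulVec, Finset.mul_sum]
    rw [Finset.sum_comm]
    refine Finset.sum_congr rfl fun y _ => ?_
    simp_rw [← mul_assoc, ← Finset.sum_mul, hinv]
  have hjen : ∀ x, matMulVec S g x * Real.log (matMulVec S g x)
      ≤ ∑ y, S x y * (g y * Real.log (g y)) := by
    intro x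
    have := Real.convexOn_mul_log.map_sum_le (t := Finset.univ)
      (w := fun y => S x y) (p := fun y => g y)
      (fun y _ => hS0 x y) (hS1 x) (fun y _ => hg y)
    simpa [matMulVec, smul_eq_mul] using this
  have hfirst : ∑ x, π x * matMulVec S g x * Real.log (matMulVec S g x)
      ≤ ∑ x, π x * g x * Real.log (g x) := by
    calc ∑ x, π x * matMulVec S g x * Real.log (matMulVec S g x)
        ≤ ∑ x, π x * ∑ y, S x y * (g y * Real.log (g y)) := by
          refine Finset.sum_le_sum fun x _ => ?_
          rw [mul_assoc]
          exact mul_le_mul_of_nonneg_left (hjen x) (hπ0 x)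
      _ = ∑ x, π x * g x * Real.log (g x) := by
          simp_rw [Finset.mul_sum]
          rw [Finset.sum_comm]
          refine Finset.sum_congr rfl fun y _ => ?_
          simp_rw [← mul_assoc, ← Finset.sum_mul, hinv]
  unfold ent
  rw [hmean]
  exact sub_le_sub_right hfirst _

/-- For an idempotent stochastic matrix `S` reversible w.r.t. `π`, and `S̃ = (S+I)/2`,
one has `Ent_π(Sf) ≤ Ent_π(S̃f)` for all nonnegative `f`. -/
theorem stmt4 {Ω : Type*} [Fintype Ω]
    (S : Ω → Ω → ℝ) (π : Ω → ℝ)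
    (hS0 : ∀ x y, 0 ≤ S x y) (hS1 : ∀ x, ∑ y, S x y = 1)
    (hπ0 : ∀ x, 0 < π x) (hπ1 : ∑ x, π x = 1)
    (hrev : ∀ x y, π x * S x y = π y * S y x)
    (hidem : ∀ x y, matComp S S x y = S x y) :
    ∀ f : Ω → ℝ, (∀ x, 0 ≤ f x) →
      ent π (matMulVec S f) ≤
        ent π (matMulVec (fun x y => (S x y + (if x = y then 1 else 0)) / 2) f) := by
  intro f hf
  set g : Ω → ℝ := fun x => (matMulVec S f x + f x) / 2 with hgdef
  have hgeq : matMulVec (fun x y => (S x y + (if x = y then 1 else 0)) / 2) f = g := by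
    funext x
    simp only [matMulVec, hgdef]
    have key : ∀ y, (S x y + if x = y then 1 else 0) / 2 * f y
        = S x y * f y / 2 + (if x = y then f y else 0) / 2 := by
      intro y; split <;> ring
    rw [Finset.sum_congr rfl fun y _ => key y, Finset.sum_add_distrib,
      ← Finset.sum_div, ← Finset.sum_div, Finset.sum_ite_eq]
    simp only [Finset.mem_univ, if_true]
    ring
  have hSg : matMulVec S g = matMulVec S f := by
    funext x
    simp only [matMulVec, hgdef]
    have h1 : ∑ y, S x y * ((∑ z, S y z * f z + f y) / 2)
        = ((∑ y, S x y * ∑ z, S y z * f z) + ∑ y, S x y * f y) / 2 := by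
      have key : ∀ y, S x y * ((∑ z, S y z * f z + f y) / 2)
          = S x y * (∑ z, S y z * f z) / 2 + S x y * f y / 2 := fun y => by ring
      rw [Finset.sum_congr rfl fun y _ => key y, Finset.sum_add_distrib,
        ← Finset.sum_div, ← Finset.sum_div]
      ring
    have h2 : (∑ y, S x y * ∑ z, S y z * f z) = ∑ z, S x z * f z := by
      simp_rw [Finset.mul_sum, ← mul_assoc]
      rw [Finset.sum_comm]
      refine Finset.sum_congr rfl fun z _ => ?_
      rw [← Finset.sum_mul]
      congr 1
      exact hidem x z
    rw [show (matMulVec S f : Ω → ℝ) = fun x => ∑ y, S x y * f y from rfl] at *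
    rw [h1, h2]
    ring
  have hg0 : ∀ x, 0 ≤ g x := by
    intro x
    have : 0 ≤ matMulVec S f x :=
      Finset.sum_nonneg fun y _ => mul_nonneg (hS0 x y) (hf y)
    show 0 ≤ (matMulVec S f x + f x) / 2
    exact div_nonneg (add_nonneg this (hf x)) (by norm_num)
  rw [hgeq, ← hSg]
  exact ent_mono S π hS0 hS1 (fun x => (hπ0 x).le) hrev g hg0
end

section
/- Let S and S' be two idempotent stochastic matrices each reversible with respect to the same distribution π on a finite state space, and let Q = (S+S')/2. Suppose there exists δ ∈ (0,1) such that Ent_π(Qf) ≤ (1−δ)·Ent_π(f) for all nonnegative functions f. Then Ent_π(SS'f) ≤ (1−δ)·Ent_π(f) and Ent_π(S'Sf) ≤ (1−δ)·Ent_π(f) for all nonnegative f. -/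
open scoped Classical BigOperators

lemma entropy_dataproc {Ω : Type*} [Fintype Ω] (π : Ω → ℝ) (P : Ω → Ω → ℝ)
    (hP0 : ∀ x y, 0 ≤ P x y) (hP1 : ∀ x, ∑ y, P x y = 1)
    (hinv : ∀ y, ∑ x, π x * P x y = π y) (hπ0 : ∀ x, 0 ≤ π x)
    (f : Ω → ℝ) (hf : ∀ x, 0 ≤ f x) :
    ent π (matMulVec P f) ≤ ent π f := by
  simp only [ent, matMulVec]
  have hmean : ∑ x, π x * (∑ y, P x y * f y) = ∑ x, π x * f x := by
    simp only [Finset.mul_sum]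
    rw [Finset.sum_comm]
    refine Finset.sum_congr rfl fun y _ => ?_
    have : ∑ x, π x * (P x y * f y) = (∑ x, π x * P x y) * f y := by
      rw [Finset.sum_mul]; exact Finset.sum_congr rfl fun x _ => by ring
    rw [this, hinv]
  rw [hmean]
  have key : ∀ x, (∑ y, P x y * f y) * Real.log (∑ y, P x y * f y)
      ≤ ∑ y, P x y * (f y * Real.log (f y)) := by
    intro x
    have := Real.convexOn_mul_log.map_sum_le (t := Finset.univ) (w := P x) (p := f)
      (fun i _ => hP0 x i) (hP1 x) (fun i _ => hf i)
    simpa [smul_eq_mul] using this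
  have step : ∑ x, π x * (∑ y, P x y * f y) * Real.log (∑ y, P x y * f y)
      ≤ ∑ x, π x * f x * Real.log (f x) := by
    calc ∑ x, π x * (∑ y, P x y * f y) * Real.log (∑ y, P x y * f y)
        ≤ ∑ x, π x * ∑ y, P x y * (f y * Real.log (f y)) := by
          refine Finset.sum_le_sum fun x _ => ?_
          rw [mul_assoc]
          exact mul_le_mul_of_nonneg_left (key x) (hπ0 x)
      _ = ∑ x, π x * f x * Real.log (f x) := by
          simp only [Finset.mul_sum]
          rw [Finset.sum_comm]
          refine Finset.sum_congr rfl fun y _ => ?_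
          have : ∑ x, π x * (P x y * (f y * Real.log (f y)))
              = (∑ x, π x * P x y) * (f y * Real.log (f y)) := by
            rw [Finset.sum_mul]; exact Finset.sum_congr rfl fun x _ => by ring
          rw [this, hinv]; ring
  linarith

lemma matMulVec_comp {Ω : Type*} [Fintype Ω] (P R : Ω → Ω → ℝ) (f : Ω → ℝ) :
    matMulVec (matComp P R) f = matMulVec P (matMulVec R f) := by
  funext x
  simp only [matMulVec, matComp, Finset.sum_mul, Finset.mul_sum]
  rw [Finset.sum_comm]
  exact Finset.sum_congr rfl fun z _ => Finset.sum_congr rfl fun y _ => by ring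

/-- If `S, S'` are idempotent stochastic matrices reversible w.r.t. `π` and the average
`Q = (S+S')/2` contracts entropy at rate `δ`, then so do the products `SS'` and `S'S`. -/
theorem stmt5 {Ω : Type*} [Fintype Ω]
    (S S' : Ω → Ω → ℝ) (π : Ω → ℝ) (δ : ℝ)
    (hS0 : ∀ x y, 0 ≤ S x y) (hS1 : ∀ x, ∑ y, S x y = 1)
    (hS'0 : ∀ x y, 0 ≤ S' x y) (hS'1 : ∀ x, ∑ y, S' x y = 1)
    (hπ0 : ∀ x, 0 < π x) (hπ1 : ∑ x, π x = 1)
    (hrevS : ∀ x y, π x * S x y = π y * S y x)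
    (hrevS' : ∀ x y, π x * S' x y = π y * S' y x)
    (hidemS : ∀ x y, matComp S S x y = S x y)
    (hidemS' : ∀ x y, matComp S' S' x y = S' x y)
    (hδ0 : 0 < δ) (hδ1 : δ < 1)
    (hQ : ∀ f : Ω → ℝ, (∀ x, 0 ≤ f x) →
      ent π (matMulVec (fun x y => (S x y + S' x y) / 2) f) ≤ (1 - δ) * ent π f) :
    ∀ f : Ω → ℝ, (∀ x, 0 ≤ f x) →
      ent π (matMulVec (matComp S S') f) ≤ (1 - δ) * ent π f ∧
      ent π (matMulVec (matComp S' S) f) ≤ (1 - δ) * ent π f := by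
  classical
  set Qm : Ω → Ω → ℝ := fun x y => (S x y + S' x y) / 2 with hQm
  have hinvS : ∀ y, ∑ x, π x * S x y = π y := fun y => by
    simp only [hrevS _ y]
    rw [← Finset.mul_sum, hS1 y, mul_one]
  have hinvS' : ∀ y, ∑ x, π x * S' x y = π y := fun y => by
    simp only [hrevS' _ y]
    rw [← Finset.mul_sum, hS'1 y, mul_one]
  have hπ0' : ∀ x, 0 ≤ π x := fun x => (hπ0 x).le
  -- the key algebraic identities  S ∘ Q ∘ S' = S ∘ S'  and  S' ∘ Q ∘ S = S' ∘ S
  have hcompgen : ∀ (A B : Ω → Ω → ℝ), (∀ x y, matComp A A x y = A x y) →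
      (∀ x y, matComp B B x y = B x y) →
      matComp A (matComp (fun x y => (A x y + B x y) / 2) B) = matComp A B := by
    intro A B hA hB
    funext x y
    have expand : matComp A (matComp (fun x y => (A x y + B x y) / 2) B) x y
        = (∑ a, ∑ b, A x a * (A a b * B b y) + ∑ a, ∑ b, A x a * (B a b * B b y)) / 2 := by
      simp only [matComp, Finset.mul_sum, ← Finset.sum_add_distrib, Finset.sum_div]
      refine Finset.sum_congr rfl fun a _ => ?_
      exact Finset.sum_congr rfl fun b _ => by ring
    rw [expand]
    have h1 : ∑ a, ∑ b, A x a * (A a b * B b y) = matComp A B x y := by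
      rw [Finset.sum_comm]
      simp only [matComp]
      calc ∑ b, ∑ a, A x a * (A a b * B b y)
          = ∑ b, (∑ a, A x a * A a b) * B b y := by
            refine Finset.sum_congr rfl fun b _ => ?_
            rw [Finset.sum_mul]
            exact Finset.sum_congr rfl fun a _ => by ring
        _ = ∑ b, A x b * B b y := by
            refine Finset.sum_congr rfl fun b _ => ?_
            rw [show ∑ a, A x a * A a b = A x b from hA x b]
    have h2 : ∑ a, ∑ b, A x a * (B a b * B b y) = matComp A B x y := by
      simp only [matComp]
      refine Finset.sum_congr rfl fun a _ => ?_
      rw [← Finset.mul_sum, show ∑ b, B a b * B b y = B a y from hB a y]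
    rw [h1, h2]; ring
  have hSS' : matComp S (matComp Qm S') = matComp S S' := hcompgen S S' hidemS hidemS'
  have hS'S : matComp S' (matComp (fun x y => (S' x y + S x y)/2) S) = matComp S' S :=
    hcompgen S' S hidemS' hidemS
  have hQmsymm : (fun x y => (S' x y + S x y)/2) = Qm := by
    funext x y; simp only [hQm]; ring
  rw [hQmsymm] at hS'S
  intro f hf
  have hS'f0 : ∀ x, 0 ≤ matMulVec S' f x := fun x =>
    Finset.sum_nonneg fun y _ => mul_nonneg (hS'0 x y) (hf y)
  have hSf0 : ∀ x, 0 ≤ matMulVec S f x := fun x =>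
    Finset.sum_nonneg fun y _ => mul_nonneg (hS0 x y) (hf y)
  have hδ' : (0:ℝ) ≤ 1 - δ := by linarith
  constructor
  · -- SS' f = S (Q (S' f))
    have heq : matMulVec (matComp S S') f
        = matMulVec S (matMulVec Qm (matMulVec S' f)) := by
      rw [← hSS', matMulVec_comp, matMulVec_comp]
    rw [heq]
    calc ent π (matMulVec S (matMulVec Qm (matMulVec S' f)))
        ≤ ent π (matMulVec Qm (matMulVec S' f)) := by
          refine entropy_dataproc π S hS0 hS1 hinvS hπ0' _ fun x => ?_
          exact Finset.sum_nonneg fun y _ => mul_nonneg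
            (by have := hS0 x y; have := hS'0 x y; simp only [hQm]; positivity)
            (hS'f0 y)
      _ ≤ (1 - δ) * ent π (matMulVec S' f) := hQ _ hS'f0
      _ ≤ (1 - δ) * ent π f := by
          exact mul_le_mul_of_nonneg_left
            (entropy_dataproc π S' hS'0 hS'1 hinvS' hπ0' f hf) hδ'
  · have heq : matMulVec (matComp S' S) f
        = matMulVec S' (matMulVec Qm (matMulVec S f)) := by
      rw [← hS'S, matMulVec_comp, matMulVec_comp]
    rw [heq]
    calc ent π (matMulVec S' (matMulVec Qm (matMulVec S f)))
        ≤ ent π (matMulVec Qm (matMulVec S f)) := by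
          refine entropy_dataproc π S' hS'0 hS'1 hinvS' hπ0' _ fun x => ?_
          exact Finset.sum_nonneg fun y _ => mul_nonneg
            (by have := hS0 x y; have := hS'0 x y; simp only [hQm]; positivity)
            (hSf0 y)
      _ ≤ (1 - δ) * ent π (matMulVec S f) := hQ _ hSf0
      _ ≤ (1 - δ) * ent π f := by
          exact mul_le_mul_of_nonneg_left
            (entropy_dataproc π S hS0 hS1 hinvS hπ0' f hf) hδ'
end

section
/- Let {X_t} be a discrete-time Markov chain on a finite state space Ω, reversible with respect to π and with positive semidefinite transition matrix. Let B ⊆ Ω be an event and suppose X₀ is sampled from π conditioned on B. Then Pr(X_t ∈ B) ≥ π(B) for all t ≥ 0, and for all t ≥ 1, Pr(X_t ∈ B) ≥ π(B) + (1−π(B))^{−t+1}·(Pr(X₁ ∈ B) − π(B))^t. -/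
open scoped Classical BigOperators

/-!
Put `g = 𝟙_B - π(B)` and `⟨u, v⟩ = ∑ₓ π(x) u(x) v(x)`. Since `X₀ ∼ π(· | B)` and `P` is
`π`-reversible, `Pr(X_t ∈ B) = π(B) + ⟨g, Pᵗ g⟩ / π(B)`. Every `Pᵏ` is `π`-self-adjoint and positive
(`P^{2m} = (P^m)* P^m`, `P^{2m+1} = (P^m)* P P^m`), so `bₜ = ⟨g, Pᵗ g⟩` is nonnegative, and
Cauchy–Schwarz for the form `⟨·, Pᵏ ·⟩` at `g` and `P g` gives `b_{k+1}² ≤ b_k b_{k+2}`. A nonnegative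
log-convex sequence satisfies `b₁ᵗ ≤ b₀^{t-1} bₜ`, and `b₀ = π(B) (1 - π(B))`.
-/

open Matrix

section LogConvex

variable {R : Type*} [CommSemiring R] [LinearOrder R] [IsStrictOrderedRing R]

theorem mul_le_mul_succ_of_sq_le_mul {b : ℕ → R} (hb : ∀ n, 0 ≤ b n)
    (hlc : ∀ n, b (n + 1) ^ 2 ≤ b n * b (n + 2)) (n : ℕ) :
    b 1 * b n ≤ b 0 * b (n + 1) := by
  induction n with
  | zero => rw [mul_comm]
  | succ n ih =>
    rcases (hb (n + 1)).eq_or_lt with h0 | hpos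
    · rw [← h0, mul_zero]
      exact mul_nonneg (hb 0) (hb _)
    · refine le_of_mul_le_mul_right ?_ hpos
      calc b 1 * b (n + 1) * b (n + 1) = b 1 * b (n + 1) ^ 2 := by ring
        _ ≤ b 1 * (b n * b (n + 2)) := mul_le_mul_of_nonneg_left (hlc n) (hb 1)
        _ = b 1 * b n * b (n + 2) := by ring
        _ ≤ b 0 * b (n + 1) * b (n + 2) := mul_le_mul_of_nonneg_right ih (hb _)
        _ = b 0 * b (n + 1 + 1) * b (n + 1) := by ring

theorem pow_succ_le_pow_mul_of_sq_le_mul {b : ℕ → R} (hb : ∀ n, 0 ≤ b n)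
    (hlc : ∀ n, b (n + 1) ^ 2 ≤ b n * b (n + 2)) (s : ℕ) :
    b 1 ^ (s + 1) ≤ b 0 ^ s * b (s + 1) := by
  induction s with
  | zero => simp
  | succ s ih =>
    calc b 1 ^ (s + 2) = b 1 * b 1 ^ (s + 1) := by ring
      _ ≤ b 1 * (b 0 ^ s * b (s + 1)) := mul_le_mul_of_nonneg_left ih (hb 1)
      _ = b 0 ^ s * (b 1 * b (s + 1)) := by ring
      _ ≤ b 0 ^ s * (b 0 * b (s + 2)) :=
          mul_le_mul_of_nonneg_left (mul_le_mul_succ_of_sq_le_mul hb hlc _) (pow_nonneg (hb 0) s)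
      _ = b 0 ^ (s + 1) * b (s + 1 + 1) := by ring

end LogConvex

namespace Matrix

theorem conjTranspose_pow_mul_eq_mul_pow {n R : Type*} [Fintype n] [DecidableEq n] [Semiring R]
    [StarRing R] {D Q : Matrix n n R} (hD : D.IsHermitian) (hDQ : (D * Q).IsHermitian) (k : ℕ) :
    (Q ^ k)ᴴ * D = D * Q ^ k := by
  have h : SemiconjBy D Q Qᴴ := by
    rw [SemiconjBy, ← hDQ.eq, conjTranspose_mul, hD.eq]
  rw [conjTranspose_pow, (h.pow_right k).eq]

variable {n R : Type*} [Fintype n] [DecidableEq n]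

theorem pow_mulVec_one [Semiring R] {Q : Matrix n n R} (hQ : Q *ᵥ 1 = 1) (k : ℕ) :
    Q ^ k *ᵥ 1 = 1 := by
  induction k with
  | zero => simp
  | succ k ih => rw [pow_succ, ← mulVec_mulVec, hQ, ih]

theorem sum_eq_dotProduct_indicator [Semiring R] (B : Finset n) (w : n → R) :
    ∑ x ∈ B, w x = w ⬝ᵥ fun x => if x ∈ B then 1 else 0 := by
  simp [dotProduct, Finset.sum_ite_mem]

theorem IsHermitian.mul_pow [Semiring R] [StarRing R] {D Q : Matrix n n R} (hD : D.IsHermitian)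
    (hDQ : (D * Q).IsHermitian) (k : ℕ) : (D * Q ^ k).IsHermitian := by
  rw [IsHermitian, conjTranspose_mul, hD.eq, conjTranspose_pow_mul_eq_mul_pow hD hDQ]

section Ring

variable [Ring R] [PartialOrder R] [StarRing R] {D Q : Matrix n n R}

theorem PosSemidef.mul_pow (hD : D.PosSemidef) (hDQ : (D * Q).PosSemidef) (k : ℕ) :
    (D * Q ^ k).PosSemidef := by
  have hcomm := conjTranspose_pow_mul_eq_mul_pow hD.isHermitian hDQ.isHermitian
  obtain ⟨m, rfl | rfl⟩ := Nat.even_or_odd' k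
  · have := hD.conjTranspose_mul_mul_same (Q ^ m)
    rwa [hcomm, mul_assoc, ← pow_add, ← two_mul] at this
  · have := hDQ.conjTranspose_mul_mul_same (Q ^ m)
    rwa [← mul_assoc, hcomm, mul_assoc, mul_assoc, ← pow_succ', ← pow_add,
      show m + (m + 1) = 2 * m + 1 by ring] at this

end Ring

section LinearOrder

variable [CommRing R] [LinearOrder R] [IsStrictOrderedRing R] [StarRing R] [TrivialStar R]

theorem PosSemidef.sq_dotProduct_mulVec_le {A : Matrix n n R} (hA : A.PosSemidef) (u v : n → R) :
    (u ⬝ᵥ A *ᵥ v) ^ 2 ≤ (u ⬝ᵥ A *ᵥ u) * (v ⬝ᵥ A *ᵥ v) := by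
  simp only [← toBilin'_apply']
  refine LinearMap.BilinForm.apply_sq_le_of_symm _ (fun x => ?_) ?_ u v
  · simpa [toBilin'_apply'] using hA.dotProduct_mulVec_nonneg x
  · exact LinearMap.BilinForm.isSymm_iff.mp
      (isSymm_toBilin'_iff_isSymm.mpr (isHermitian_iff_isSymm.mp hA.isHermitian))

theorem sq_dotProduct_mul_pow_succ_mulVec_le {D Q : Matrix n n R} (hD : D.PosSemidef)
    (hDQ : (D * Q).PosSemidef) (v : n → R) (k : ℕ) :
    (v ⬝ᵥ (D * Q ^ (k + 1)) *ᵥ v) ^ 2 ≤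
      (v ⬝ᵥ (D * Q ^ k) *ᵥ v) * (v ⬝ᵥ (D * Q ^ (k + 2)) *ᵥ v) := by
  have hQ : Qᴴ * D = D * Q := by
    simpa using conjTranspose_pow_mul_eq_mul_pow hD.isHermitian hDQ.isHermitian 1
  have hcross : v ⬝ᵥ (D * Q ^ k) *ᵥ (Q *ᵥ v) = v ⬝ᵥ (D * Q ^ (k + 1)) *ᵥ v := by
    rw [mulVec_mulVec, pow_succ, mul_assoc]
  have hshift : (Q *ᵥ v) ⬝ᵥ (D * Q ^ k) *ᵥ (Q *ᵥ v) = v ⬝ᵥ (D * Q ^ (k + 2)) *ᵥ v := by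
    rw [mulVec_mulVec, ← vecMul_transpose, ← dotProduct_mulVec, mulVec_mulVec,
      ← conjTranspose_eq_transpose_of_trivial, ← mul_assoc, ← mul_assoc, hQ, mul_assoc D,
      ← pow_succ', mul_assoc, ← pow_succ]
  simpa only [hcross, hshift] using (hD.mul_pow hDQ k).sq_dotProduct_mulVec_le v (Q *ᵥ v)

end LinearOrder

end Matrix

section ReversibleChain

variable {Ω : Type*} [Fintype Ω]

theorem stepDist_iterate (P : Ω → Ω → ℝ) (ζ : Ω → ℝ) (t : ℕ) :
    (stepDist P)^[t] ζ = ζ ᵥ* of P ^ t := by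
  induction t with
  | zero => simp
  | succ t ih => rw [Function.iterate_succ_apply', ih, pow_succ, ← vecMul_vecMul]; rfl

theorem sum_mul_matMulVec_eq_dotProduct (P : Ω → Ω → ℝ) (π f : Ω → ℝ) :
    ∑ x, π x * f x * matMulVec P f x = f ⬝ᵥ (diagonal π * of P) *ᵥ f := by
  rw [← mulVec_mulVec, dotProduct]
  refine Finset.sum_congr rfl fun x _ => ?_
  rw [mulVec_diagonal]
  simp only [matMulVec, mulVec, dotProduct, of_apply]
  ring

theorem isHermitian_diagonal_mul_of_reversible {P : Ω → Ω → ℝ} {π : Ω → ℝ}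
    (hrev : ∀ x y, π x * P x y = π y * P y x) : (diagonal π * of P).IsHermitian := by
  ext x y
  simp [diagonal_mul, hrev]

theorem posSemidef_diagonal_mul_of_reversible {P : Ω → Ω → ℝ} {π : Ω → ℝ}
    (hrev : ∀ x y, π x * P x y = π y * P y x)
    (hpsd : ∀ f : Ω → ℝ, 0 ≤ ∑ x, π x * f x * matMulVec P f x) :
    (diagonal π * of P).PosSemidef :=
  .of_dotProduct_mulVec_nonneg (isHermitian_diagonal_mul_of_reversible hrev) fun f => by
    simpa [← sum_mul_matMulVec_eq_dotProduct] using hpsd f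

theorem sum_stepDist_iterate_eq_add_div {P : Ω → Ω → ℝ} {π : Ω → ℝ} {B : Finset Ω}
    (hP1 : ∀ x, ∑ y, P x y = 1) (hπ1 : ∑ x, π x = 1)
    (hrev : ∀ x y, π x * P x y = π y * P y x) (hB : ∑ x ∈ B, π x ≠ 0) (t : ℕ) :
    ∑ x ∈ B, (stepDist P)^[t] (fun y => if y ∈ B then π y / ∑ z ∈ B, π z else 0) x =
      ∑ x ∈ B, π x + (fun x => (if x ∈ B then 1 else 0) - ∑ z ∈ B, π z) ⬝ᵥ
        (diagonal π * of P ^ t) *ᵥ (fun x => (if x ∈ B then 1 else 0) - ∑ z ∈ B, π z) /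
          ∑ x ∈ B, π x := by
  set c := ∑ x ∈ B, π x
  set ind : Ω → ℝ := fun x => if x ∈ B then 1 else 0
  set A := diagonal π * of P ^ t
  have hA : A.IsHermitian :=
    (isHermitian_diagonal π).mul_pow (isHermitian_diagonal_mul_of_reversible hrev) t
  have hA1 : A *ᵥ 1 = π := by
    have hP1' : of P *ᵥ 1 = 1 := funext fun x => by simp [mulVec, dotProduct, hP1]
    ext x
    simp [A, ← mulVec_mulVec, pow_mulVec_one hP1' t, mulVec_diagonal]
  have hstart : (fun y => if y ∈ B then π y / c else 0) = c⁻¹ • (ind ᵥ* diagonal π) := by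
    ext y
    by_cases hy : y ∈ B <;> simp [ind, hy, vecMul_diagonal, div_eq_inv_mul]
  have hprob : ∑ x ∈ B, (stepDist P)^[t] (fun y => if y ∈ B then π y / c else 0) x =
      (ind ⬝ᵥ A *ᵥ ind) / c := by
    rw [sum_eq_dotProduct_indicator, stepDist_iterate, hstart, smul_vecMul, smul_dotProduct,
      vecMul_vecMul, ← dotProduct_mulVec, smul_eq_mul, inv_mul_eq_div]
  have hcross : ind ⬝ᵥ A *ᵥ 1 = c := by
    rw [hA1, dotProduct_comm, ← sum_eq_dotProduct_indicator]
  have hcross' : 1 ⬝ᵥ A *ᵥ ind = c := by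
    rw [dotProduct_mulVec, ← mulVec_transpose, ← conjTranspose_eq_transpose_of_trivial, hA.eq,
      dotProduct_comm, hcross]
  have hconst : 1 ⬝ᵥ A *ᵥ 1 = 1 := by rw [hA1, one_dotProduct, hπ1]
  have hexpand : (ind - c • 1) ⬝ᵥ A *ᵥ (ind - c • 1) = ind ⬝ᵥ A *ᵥ ind - c ^ 2 := by
    simp only [mulVec_sub, mulVec_smul, sub_dotProduct, dotProduct_sub, smul_dotProduct,
      dotProduct_smul, hcross, hcross', hconst, smul_eq_mul]
    ring
  have hg : (fun x => (if x ∈ B then 1 else 0) - c) = ind - c • 1 := by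
    ext x; simp [ind]
  rw [hprob, hg, hexpand]
  field_simp
  ring

end ReversibleChain

theorem stmt6_general {Ω : Type*} [Fintype Ω]
    (P : Ω → Ω → ℝ) (π : Ω → ℝ) (B : Finset Ω)
    (hP1 : ∀ x, ∑ y, P x y = 1)
    (hπ0 : ∀ x, 0 < π x) (hπ1 : ∑ x, π x = 1)
    (hrev : ∀ x y, π x * P x y = π y * P y x)
    (hpsd : ∀ f : Ω → ℝ, 0 ≤ ∑ x, π x * f x * matMulVec P f x)
    (hB0 : 0 < ∑ x ∈ B, π x) (hB1 : ∑ x ∈ B, π x < 1) :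
    (∀ t : ℕ,
      ∑ x ∈ B, π x ≤
        ∑ x ∈ B, (stepDist P)^[t] (fun y => if y ∈ B then π y / ∑ z ∈ B, π z else 0) x) ∧
    (∀ t : ℕ, 1 ≤ t →
      (∑ x ∈ B, π x) +
        (1 - ∑ x ∈ B, π x) ^ ((1 : ℤ) - (t : ℤ)) *
          ((∑ x ∈ B, (stepDist P)^[1] (fun y => if y ∈ B then π y / ∑ z ∈ B, π z else 0) x) -
            ∑ x ∈ B, π x) ^ t ≤
        ∑ x ∈ B, (stepDist P)^[t] (fun y => if y ∈ B then π y / ∑ z ∈ B, π z else 0) x) := by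
  have hprob := sum_stepDist_iterate_eq_add_div hP1 hπ1 hrev hB0.ne'
  set πB := ∑ x ∈ B, π x
  set g : Ω → ℝ := fun x => (if x ∈ B then 1 else 0) - πB
  set e : ℕ → ℝ := fun t => g ⬝ᵥ (diagonal π * of P ^ t) *ᵥ g / πB
  have hD : (diagonal π).PosSemidef := .diagonal fun x => (hπ0 x).le
  have hDP := posSemidef_diagonal_mul_of_reversible hrev hpsd
  have he_nonneg (t : ℕ) : 0 ≤ e t :=
    div_nonneg (by simpa using (hD.mul_pow hDP t).dotProduct_mulVec_nonneg g) hB0.le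
  have he_logconvex (n : ℕ) : e (n + 1) ^ 2 ≤ e n * e (n + 2) := by
    simp only [e, div_pow, div_mul_div_comm, ← sq]
    exact div_le_div_of_nonneg_right (sq_dotProduct_mul_pow_succ_mulVec_le hD hDP g n)
      (sq_nonneg _)
  have he0 : e 0 = 1 - πB := by
    have hstart : ∑ x ∈ B, (stepDist P)^[0] (fun y => if y ∈ B then π y / πB else 0) x = 1 := by
      rw [Function.iterate_zero, id, Finset.sum_congr rfl fun x hx => if_pos hx, ← Finset.sum_div,
        div_self hB0.ne']
    linarith [hprob 0]
  refine ⟨fun t => by rw [hprob]; linarith [he_nonneg t], fun t ht => ?_⟩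
  obtain ⟨s, rfl⟩ := Nat.exists_eq_add_of_le' ht
  have key := pow_succ_le_pow_mul_of_sq_le_mul he_nonneg he_logconvex s
  rw [he0] at key
  rw [hprob, hprob]
  change πB + (1 - πB) ^ ((1 : ℤ) - (s + 1 : ℕ)) * (πB + e 1 - πB) ^ (s + 1) ≤ πB + e (s + 1)
  rw [add_sub_cancel_left, show (1 : ℤ) - (s + 1 : ℕ) = -s by push_cast; ring, _root_.zpow_neg,
    zpow_natCast]
  exact add_le_add_right ((inv_mul_le_iff₀ (pow_pos (sub_pos.mpr hB1) s)).mpr key) _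

/-- For a reversible chain with positive semidefinite transition matrix, started from `π`
conditioned on `B`: `Pr(X_t ∈ B) ≥ π(B)` for all `t`, and for `t ≥ 1`,
`Pr(X_t ∈ B) ≥ π(B) + (1-π(B))^{-t+1} (Pr(X₁ ∈ B) - π(B))^t`. -/
theorem stmt6 {Ω : Type*} [Fintype Ω]
    (P : Ω → Ω → ℝ) (π : Ω → ℝ) (B : Finset Ω)
    (hP0 : ∀ x y, 0 ≤ P x y) (hP1 : ∀ x, ∑ y, P x y = 1)
    (hπ0 : ∀ x, 0 < π x) (hπ1 : ∑ x, π x = 1)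
    (hrev : ∀ x y, π x * P x y = π y * P y x)
    (hpsd : ∀ f : Ω → ℝ, 0 ≤ ∑ x, π x * f x * matMulVec P f x)
    (hB0 : 0 < ∑ x ∈ B, π x) (hB1 : ∑ x ∈ B, π x < 1) :
    (∀ t : ℕ,
      ∑ x ∈ B, π x ≤
        ∑ x ∈ B, (stepDist P)^[t] (fun y => if y ∈ B then π y / ∑ z ∈ B, π z else 0) x) ∧
    (∀ t : ℕ, 1 ≤ t →
      (∑ x ∈ B, π x) +
        (1 - ∑ x ∈ B, π x) ^ ((1 : ℤ) - (t : ℤ)) *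
          ((∑ x ∈ B, (stepDist P)^[1] (fun y => if y ∈ B then π y / ∑ z ∈ B, π z else 0) x) -
            ∑ x ∈ B, π x) ^ t ≤
        ∑ x ∈ B, (stepDist P)^[t] (fun y => if y ∈ B then π y / ∑ z ∈ B, π z else 0) x) :=
  stmt6_general P π B hP1 hπ0 hπ1 hrev hpsd hB0 hB1
end

section
/- For any probability measure π on a finite space and any nonnegative function f, Var_π(√f) ≤ Ent_π(f). -/
open scoped Classical BigOperators

lemma key_ineq (a b : ℝ) (ha : 0 ≤ a) (hb : 0 < b) :
    (Real.sqrt a - Real.sqrt b) ^ 2 ≤ a * Real.log a - a * Real.log b - a + b := by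
  rcases eq_or_lt_of_le ha with h | h
  · have hsb : Real.sqrt b ^ 2 = b := Real.sq_sqrt hb.le
    simp [← h]
    nlinarith [hsb]
  · have hsa := Real.sqrt_pos.mpr h
    have hsb := Real.sqrt_pos.mpr hb
    have h2 : Real.log (Real.sqrt b / Real.sqrt a) ≤ Real.sqrt b / Real.sqrt a - 1 :=
      Real.log_le_sub_one_of_pos (by positivity)
    have hl : Real.log a - Real.log b = -2 * Real.log (Real.sqrt b / Real.sqrt a) := by
      rw [Real.log_div hsb.ne' hsa.ne', Real.log_sqrt hb.le, Real.log_sqrt h.le]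
      ring
    have h3 : 2 - 2 * (Real.sqrt b / Real.sqrt a) ≤ Real.log a - Real.log b := by
      rw [hl]; nlinarith [h2]
    have hmul : a * (2 - 2 * (Real.sqrt b / Real.sqrt a)) ≤ a * (Real.log a - Real.log b) :=
      mul_le_mul_of_nonneg_left h3 ha
    have hsq : Real.sqrt a ^ 2 = a := Real.sq_sqrt ha
    have hsqb : Real.sqrt b ^ 2 = b := Real.sq_sqrt hb.le
    have haa : a * (Real.sqrt b / Real.sqrt a) = Real.sqrt a * Real.sqrt b := by
      field_simp
      nlinarith [hsq]
    nlinarith [hmul, hsq, hsqb]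

/-- `Var_π(√f) ≤ Ent_π(f)` for all nonnegative `f`. -/
theorem stmt10 {Ω : Type*} [Fintype Ω]
    (π f : Ω → ℝ)
    (hπ0 : ∀ x, 0 < π x) (hπ1 : ∑ x, π x = 1)
    (hf : ∀ x, 0 ≤ f x) :
    (∑ x, π x * Real.sqrt (f x) ^ 2) - (∑ x, π x * Real.sqrt (f x)) ^ 2 ≤ ent π f := by
  classical
  set m : ℝ := ∑ x, π x * f x with hm
  have hm0 : 0 ≤ m := Finset.sum_nonneg fun x _ => mul_nonneg (hπ0 x).le (hf x)
  have hsqf : ∀ x, Real.sqrt (f x) ^ 2 = f x := fun x => Real.sq_sqrt (hf x)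
  have hVar : (∑ x, π x * Real.sqrt (f x) ^ 2) = m := by
    simp only [hsqf, hm]
  rcases eq_or_lt_of_le hm0 with hm' | hm'
  · have hfz : ∀ x, f x = 0 := by
      intro x
      have h1 := (Finset.sum_eq_zero_iff_of_nonneg
        (fun y _ => mul_nonneg (hπ0 y).le (hf y))).mp hm'.symm x (Finset.mem_univ x)
      exact (mul_eq_zero.mp h1).resolve_left (hπ0 x).ne'
    simp [ent, hfz]
  · set s : ℝ := ∑ x, π x * Real.sqrt (f x) with hs
    have hsm : Real.sqrt m ^ 2 = m := Real.sq_sqrt hm0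
    have hent : 2 * m - 2 * Real.sqrt m * s ≤ ent π f := by
      have hsum : (∑ x, π x * ((Real.sqrt (f x) - Real.sqrt m) ^ 2))
          ≤ ∑ x, π x * (f x * Real.log (f x) - f x * Real.log m - f x + m) :=
        Finset.sum_le_sum fun x _ =>
          mul_le_mul_of_nonneg_left (key_ineq (f x) m (hf x) hm') (hπ0 x).le
      have hL : (∑ x, π x * ((Real.sqrt (f x) - Real.sqrt m) ^ 2))
          = 2 * m - 2 * Real.sqrt m * s := by
        have h1 : ∀ x ∈ Finset.univ, π x * ((Real.sqrt (f x) - Real.sqrt m) ^ 2)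
            = π x * f x - 2 * Real.sqrt m * (π x * Real.sqrt (f x)) + m * π x := fun x _ => by
          linear_combination (π x) * (hsqf x) + (π x) * hsm
        rw [Finset.sum_congr rfl h1, Finset.sum_add_distrib, Finset.sum_sub_distrib,
          ← Finset.mul_sum, ← Finset.mul_sum, hπ1, ← hm, ← hs]
        ring
      have hR : (∑ x, π x * (f x * Real.log (f x) - f x * Real.log m - f x + m)) = ent π f := by
        unfold ent
        have h1 : ∀ x ∈ Finset.univ, π x * (f x * Real.log (f x) - f x * Real.log m - f x + m)
            = π x * f x * Real.log (f x) - π x * f x * Real.log m - π x * f x + m * π x :=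
          fun x _ => by ring
        rw [Finset.sum_congr rfl h1, Finset.sum_add_distrib, Finset.sum_sub_distrib,
          Finset.sum_sub_distrib, ← Finset.sum_mul, ← Finset.mul_sum, hπ1, ← hm]
        ring
      rw [← hL, ← hR]
      exact hsum
    rw [hVar]
    nlinarith [sq_nonneg (Real.sqrt m - s), hent, hsm]
end

section
/- Let P be the transition matrix of the Swendsen-Wang dynamics for the q-state ferromagnetic Potts model on a finite graph G, with stationary Gibbs distribution μ. Suppose the joint Edwards-Sokal measure ν satisfies approximate spin/edge factorization with constant C, i.e., Ent_ν(f) ≤ C·(ν[Ent_ν(f|σ)] + ν[Ent_ν(f|A)]) for all nonnegative f on the joint space. Then for all nonnegative functions f on spin configurations, Ent_μ(P f) ≤ (1 − 1/C)·Ent_μ(f). -/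
open scoped Classical BigOperators

/-- Weight of a joint spin/edge (Edwards–Sokal) configuration: `p^{|A|}(1-p)^{|E|-|A|} 1(A ⊆ M(σ))`
with `p = 1 - e^{-β}`. -/
noncomputable def esWeight {V : Type*} [Fintype V] [DecidableEq V]
    (E : Finset (V × V)) (q : ℕ) (β : ℝ) (z : (V → Fin q) × Finset (V × V)) : ℝ :=
  (1 - Real.exp (-β)) ^ z.2.card * Real.exp (-β) ^ (E.card - z.2.card) *
    (if z.2 ⊆ E.filter (fun e => z.1 e.1 = z.1 e.2) then 1 else 0)

/-- The Edwards–Sokal joint measure. -/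
noncomputable def esMeasure {V : Type*} [Fintype V] [DecidableEq V]
    (E : Finset (V × V)) (q : ℕ) (β : ℝ) (z : (V → Fin q) × Finset (V × V)) : ℝ :=
  esWeight E q β z / ∑ w : (V → Fin q) × Finset (V × V), esWeight E q β w

/-- The ferromagnetic `q`-state Potts Gibbs measure: `μ(σ) ∝ exp(-β |D(σ)|)`. -/
noncomputable def pottsMeasure {V : Type*} [Fintype V] [DecidableEq V]
    (E : Finset (V × V)) (q : ℕ) (β : ℝ) (σ : V → Fin q) : ℝ :=
  Real.exp (-β * ((E.filter (fun e => σ e.1 ≠ σ e.2)).card : ℝ)) /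
    ∑ τ : V → Fin q, Real.exp (-β * ((E.filter (fun e => τ e.1 ≠ τ e.2)).card : ℝ))

/-- Swendsen–Wang transition matrix on spin configurations:
`P(σ,τ) = ∑_A ν(A|σ) ν(τ|A)`. -/
noncomputable def swMatrix {V : Type*} [Fintype V] [DecidableEq V]
    (E : Finset (V × V)) (q : ℕ) (β : ℝ) (σ τ : V → Fin q) : ℝ :=
  ∑ A : Finset (V × V),
    (esMeasure E q β (σ, A) / ∑ B : Finset (V × V), esMeasure E q β (σ, B)) *
    (esMeasure E q β (τ, A) / ∑ ρ : V → Fin q, esMeasure E q β (ρ, A))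

/-!
Lift `f` to the joint space as `F = f ∘ fst`. Then `Ent_ν F = Ent_μ f` and `ν[Ent(F|σ)] = 0`, so
factorization reads `Ent_μ f ≤ C · ν[Ent(F|A)]`. By the chain rule, `G = ν[F|A]` has
`Ent_ν G = Ent_μ f - ν[Ent(F|A)] ≤ (1 - 1/C) Ent_μ f`. One Swendsen–Wang step is
`(P f) ∘ fst = ν[G|σ]`, and conditional expectation does not increase entropy.
-/

section CondMean

variable {Ω α : Type*} [Fintype Ω] {ν : Ω → ℝ} (g : Ω → α) (f : Ω → ℝ)

lemma sub_le_mul_sub_log {a b : ℝ} (ha : 0 ≤ a) (hb : 0 < b) :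
    a - b ≤ a * (Real.log a - Real.log b) := by
  rcases ha.eq_or_lt with rfl | ha
  · simpa using hb.le
  have h := Real.one_sub_inv_le_log_of_pos (div_pos ha hb)
  rw [Real.log_div ha.ne' hb.ne', inv_div] at h
  calc a - b = a * (1 - b / a) := by field_simp
    _ ≤ a * (Real.log a - Real.log b) := mul_le_mul_of_nonneg_left h ha.le

lemma le_sum_fiber {h : Ω → ℝ} (hh : ∀ y, 0 ≤ h y) (x : Ω) :
    h x ≤ ∑ y, if g y = g x then h y else 0 := by
  simpa using Finset.single_le_sum (f := fun y => if g y = g x then h y else 0)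
    (fun y _ => by split_ifs <;> simp [hh y]) (Finset.mem_univ x)

lemma condMean_nonneg (hν : ∀ x, 0 ≤ ν x) (hf : ∀ x, 0 ≤ f x) (x : Ω) :
    0 ≤ condMean ν g f x := by
  refine div_nonneg (Finset.sum_nonneg fun y _ => ?_) (Finset.sum_nonneg fun y _ => ?_) <;>
    split_ifs
  exacts [mul_nonneg (hν y) (hf y), le_rfl, hν y, le_rfl]

lemma condMean_pos (hν : ∀ x, 0 ≤ ν x) (hf : ∀ x, 0 ≤ f x) {x : Ω} (hνx : 0 < ν x)
    (hfx : 0 < f x) : 0 < condMean ν g f x :=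
  div_pos ((mul_pos hνx hfx).trans_le (le_sum_fiber g (fun y => mul_nonneg (hν y) (hf y)) x))
    (hνx.trans_le (le_sum_fiber g hν x))

lemma condMean_congr {x y : Ω} (h : g x = g y) : condMean ν g f x = condMean ν g f y := by
  simp only [condMean, h]

lemma condMean_comp_self (hν : ∀ x, 0 ≤ ν x) (h : α → ℝ) {x : Ω} (hνx : 0 < ν x) :
    condMean ν g (h ∘ g) x = h (g x) := by
  have hD := hνx.trans_le (le_sum_fiber g hν x)
  unfold condMean
  rw [div_eq_iff hD.ne', Finset.mul_sum]
  refine Finset.sum_congr rfl fun y _ => ?_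
  split_ifs with hy <;> simp [hy, mul_comm]

lemma sum_fiber_mul_condMean (hν : ∀ x, 0 ≤ ν x) (x₀ : Ω) :
    (∑ x with g x = g x₀, ν x) * condMean ν g f x₀ = ∑ x with g x = g x₀, ν x * f x := by
  simp only [condMean, Finset.sum_filter]
  rcases eq_or_ne (∑ y, if g y = g x₀ then ν y else 0) 0 with hD | hD
  · have hν₀ : ∀ y, g y = g x₀ → ν y = 0 := fun y hy => by
      simpa [hy] using (Finset.sum_eq_zero_iff_of_nonneg
        (fun y _ => by split_ifs <;> simp [hν y])).1 hD y (Finset.mem_univ y)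
    rw [hD, zero_mul, eq_comm]
    exact Finset.sum_eq_zero fun y _ => by split_ifs with hy <;> simp [hν₀ y, hy]
  · exact mul_div_cancel₀ _ hD

lemma sum_condMean_mul (hν : ∀ x, 0 ≤ ν x) {φ : Ω → ℝ} (hφ : ∀ x y, g x = g y → φ x = φ y) :
    ∑ x, ν x * condMean ν g f x * φ x = ∑ x, ν x * f x * φ x := by
  have hmaps : ∀ x ∈ Finset.univ, g x ∈ Finset.univ.image g := fun x _ =>
    Finset.mem_image_of_mem g (Finset.mem_univ x)
  rw [← Finset.sum_fiberwise_of_maps_to hmaps, ← Finset.sum_fiberwise_of_maps_to hmaps]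
  refine Finset.sum_congr rfl fun c hc => ?_
  obtain ⟨x₀, -, rfl⟩ := Finset.mem_image.1 hc
  have hfiber : ∀ x ∈ Finset.univ.filter (g · = g x₀),
      condMean ν g f x = condMean ν g f x₀ ∧ φ x = φ x₀ := fun x hx =>
    have hx := (Finset.mem_filter.1 hx).2
    ⟨condMean_congr g f hx, hφ x x₀ hx⟩
  calc ∑ x with g x = g x₀, ν x * condMean ν g f x * φ x
      = (∑ x with g x = g x₀, ν x) * condMean ν g f x₀ * φ x₀ := by
        rw [Finset.sum_mul, Finset.sum_mul]
        exact Finset.sum_congr rfl fun x hx => by rw [(hfiber x hx).1, (hfiber x hx).2]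
    _ = ∑ x with g x = g x₀, ν x * f x * φ x := by
        rw [sum_fiber_mul_condMean g f hν, Finset.sum_mul]
        exact Finset.sum_congr rfl fun x hx => by rw [(hfiber x hx).2]

lemma sum_mul_condMean (hν : ∀ x, 0 ≤ ν x) :
    ∑ x, ν x * condMean ν g f x = ∑ x, ν x * f x := by
  simpa using sum_condMean_mul g f hν (φ := fun _ => 1) fun _ _ _ => rfl

lemma avgCondEnt_nonneg (hν : ∀ x, 0 ≤ ν x) (hf : ∀ x, 0 ≤ f x) :
    0 ≤ avgCondEnt ν g f := by
  have hterm : ∀ x, ν x * (f x - condMean ν g f x) ≤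
      ν x * f x * (Real.log (f x) - Real.log (condMean ν g f x)) := fun x => by
    rcases (hν x).eq_or_lt with hνx | hνx
    · simp [← hνx]
    rcases (hf x).eq_or_lt with hfx | hfx
    · simpa [← hfx] using mul_nonneg (hν x) (condMean_nonneg g f hν hf x)
    rw [mul_assoc]
    exact mul_le_mul_of_nonneg_left
      (sub_le_mul_sub_log (hf x) (condMean_pos g f hν hf hνx hfx)) (hν x)
  have hsum : ∑ x, ν x * (f x - condMean ν g f x) = 0 := by
    simp only [mul_sub, Finset.sum_sub_distrib, sum_mul_condMean g f hν, sub_self]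
  exact hsum ▸ Finset.sum_le_sum fun x _ => hterm x

lemma avgCondEnt_comp_self (hν : ∀ x, 0 ≤ ν x) (h : α → ℝ) : avgCondEnt ν g (h ∘ g) = 0 := by
  refine Finset.sum_eq_zero fun x _ => ?_
  rcases (hν x).eq_or_lt with hνx | hνx
  · simp [← hνx]
  · simp [condMean_comp_self g hν h hνx]

lemma ent_eq_avgCondEnt_add_ent_condMean (hν : ∀ x, 0 ≤ ν x) :
    ent ν f = avgCondEnt ν g f + ent ν (condMean ν g f) := by
  have hlog := sum_condMean_mul g f hν (φ := fun x => Real.log (condMean ν g f x))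
    fun x y h => by rw [condMean_congr g f h]
  simp only [ent, avgCondEnt, mul_sub, Finset.sum_sub_distrib, hlog, sum_mul_condMean g f hν]
  ring

lemma ent_condMean_le (hν : ∀ x, 0 ≤ ν x) (hf : ∀ x, 0 ≤ f x) :
    ent ν (condMean ν g f) ≤ ent ν f := by
  linarith [ent_eq_avgCondEnt_add_ent_condMean g f hν, avgCondEnt_nonneg g f hν hf]

end CondMean

section TwoStep

variable {S T : Type*} [Fintype S] [Fintype T] (ν : S × T → ℝ)

lemma condMean_fst_apply (G : S × T → ℝ) (s : S) (t : T) :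
    condMean ν Prod.fst G (s, t) = (∑ t', ν (s, t') * G (s, t')) / ∑ t', ν (s, t') := by
  simp only [condMean, Fintype.sum_prod_type]
  rw [Fintype.sum_eq_single s fun x hx => by simp [hx],
    Fintype.sum_eq_single s fun x hx => by simp [hx]]
  simp

lemma condMean_snd_apply (G : S × T → ℝ) (s : S) (t : T) :
    condMean ν Prod.snd G (s, t) = (∑ s', ν (s', t) * G (s', t)) / ∑ s', ν (s', t) := by
  simp only [condMean, Fintype.sum_prod_type_right]
  rw [Fintype.sum_eq_single t fun x hx => by simp [hx],
    Fintype.sum_eq_single t fun x hx => by simp [hx]]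
  simp

lemma ent_comp_fst (f : S → ℝ) : ent ν (f ∘ Prod.fst) = ent (fun s => ∑ t, ν (s, t)) f := by
  simp only [ent, Fintype.sum_prod_type, Function.comp_apply, ← Finset.sum_mul]

/-- The Markov kernel on `S` that resamples `t` given `s` and then `s` given `t`
under the joint law `ν`. -/
noncomputable def twoStepKernel (s s' : S) : ℝ :=
  ∑ t, (ν (s, t) / ∑ t', ν (s, t')) * (ν (s', t) / ∑ s'', ν (s'', t))

lemma matMulVec_twoStepKernel (f : S → ℝ) (s : S) (t : T) :
    matMulVec (twoStepKernel ν) f s =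
      condMean ν Prod.fst (condMean ν Prod.snd (f ∘ Prod.fst)) (s, t) := by
  simp only [matMulVec, twoStepKernel, condMean_fst_apply, condMean_snd_apply,
    Function.comp_apply, Finset.sum_mul, Finset.mul_sum, Finset.sum_div]
  rw [Finset.sum_comm]
  refine Finset.sum_congr rfl fun t' _ => Finset.sum_congr rfl fun s' _ => ?_
  ring

theorem ent_matMulVec_twoStepKernel_le (hν : ∀ z, 0 ≤ ν z) {C : ℝ} (hC : 0 < C)
    {f : S → ℝ} (hf : ∀ s, 0 ≤ f s)
    (hfact : ent ν (f ∘ Prod.fst) ≤ C * (avgCondEnt ν Prod.fst (f ∘ Prod.fst) +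
      avgCondEnt ν Prod.snd (f ∘ Prod.fst))) :
    ent (fun s => ∑ t, ν (s, t)) (matMulVec (twoStepKernel ν) f) ≤
      (1 - 1 / C) * ent (fun s => ∑ t, ν (s, t)) f := by
  set F := f ∘ Prod.fst
  set G := condMean ν Prod.snd F
  have hKf : matMulVec (twoStepKernel ν) f ∘ Prod.fst = condMean ν Prod.fst G :=
    funext fun z => matMulVec_twoStepKernel ν f z.1 z.2
  have hproj : ent ν (condMean ν Prod.fst G) ≤ ent ν G :=
    ent_condMean_le _ _ hν (condMean_nonneg _ _ hν fun z => hf z.1)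
  have hchain := ent_eq_avgCondEnt_add_ent_condMean Prod.snd F hν
  rw [avgCondEnt_comp_self Prod.fst hν f, zero_add] at hfact
  have hfact' : ent ν F / C ≤ avgCondEnt ν Prod.snd F := (div_le_iff₀' hC).2 hfact
  rw [← ent_comp_fst, ← ent_comp_fst, hKf]
  calc ent ν (condMean ν Prod.fst G) ≤ ent ν F - avgCondEnt ν Prod.snd F := by linarith
    _ ≤ ent ν F - ent ν F / C := by linarith
    _ = (1 - 1 / C) * ent ν F := by ring

end TwoStep

section EdwardsSokal

variable {V : Type*} [Fintype V] [DecidableEq V] (E : Finset (V × V)) (q : ℕ) (β : ℝ)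

lemma esWeight_nonneg (hβ : 0 ≤ β) (z : (V → Fin q) × Finset (V × V)) :
    0 ≤ esWeight E q β z := by
  have hp : 0 ≤ 1 - Real.exp (-β) := sub_nonneg.2 (Real.exp_le_one_iff.2 (neg_nonpos.2 hβ))
  unfold esWeight
  split_ifs <;> positivity

lemma esMeasure_nonneg (hβ : 0 ≤ β) (z : (V → Fin q) × Finset (V × V)) :
    0 ≤ esMeasure E q β z :=
  div_nonneg (esWeight_nonneg E q β hβ z)
    (Finset.sum_nonneg fun w _ => esWeight_nonneg E q β hβ w)

/-- Summing out the bonds `A ⊆ M(σ)` with the binomial theorem leaves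
`(1 - p)^{|E| - |M(σ)|} = e^{-β |D(σ)|}`. -/
lemma sum_esWeight_fst (σ : V → Fin q) :
    ∑ A : Finset (V × V), esWeight E q β (σ, A) =
      Real.exp (-β * ((E.filter (fun e => σ e.1 ≠ σ e.2)).card : ℝ)) := by
  set r := Real.exp (-β)
  set M := E.filter (fun e => σ e.1 = σ e.2)
  have hcard : M.card + (E.filter (fun e => σ e.1 ≠ σ e.2)).card = E.card :=
    Finset.card_filter_add_card_filter_not _
  calc ∑ A : Finset (V × V), esWeight E q β (σ, A)
      = ∑ A ∈ M.powerset, (1 - r) ^ A.card * r ^ (M.card - A.card) * r ^ (E.card - M.card) := by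
        simp only [esWeight, mul_ite, mul_one, mul_zero]
        rw [← Finset.sum_filter, Finset.filter_subset_univ]
        refine Finset.sum_congr rfl fun A hA => ?_
        have hAM := Finset.card_le_card (Finset.mem_powerset.1 hA)
        rw [mul_assoc, ← pow_add]
        congr 2
        omega
    _ = r ^ (E.filter (fun e => σ e.1 ≠ σ e.2)).card := by
        rw [← Finset.sum_mul, Finset.sum_pow_mul_eq_add_pow, sub_add_cancel, one_pow, one_mul]
        congr 1
        omega
    _ = _ := by rw [← Real.exp_nat_mul]; ring_nf

lemma sum_esMeasure_fst (σ : V → Fin q) :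
    ∑ A : Finset (V × V), esMeasure E q β (σ, A) = pottsMeasure E q β σ := by
  simp only [esMeasure, pottsMeasure, ← Finset.sum_div, Fintype.sum_prod_type,
    sum_esWeight_fst]

end EdwardsSokal

theorem stmt13_general {V : Type*} [Fintype V] [DecidableEq V]
    (E : Finset (V × V)) (q : ℕ) (β : ℝ) (hβ : 0 < β)
    (C : ℝ) (hC : 1 ≤ C)
    (hfact : ∀ f : ((V → Fin q) × Finset (V × V)) → ℝ, (∀ z, 0 ≤ f z) →
      ent (esMeasure E q β) f ≤
        C * (avgCondEnt (esMeasure E q β) Prod.fst f +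
             avgCondEnt (esMeasure E q β) Prod.snd f)) :
    ∀ f : (V → Fin q) → ℝ, (∀ σ, 0 ≤ f σ) →
      ent (pottsMeasure E q β) (matMulVec (swMatrix E q β) f) ≤
        (1 - 1 / C) * ent (pottsMeasure E q β) f := by
  intro f hf
  have hμ : (fun σ => ∑ A, esMeasure E q β (σ, A)) = pottsMeasure E q β :=
    funext (sum_esMeasure_fst E q β)
  rw [← hμ]
  -- `swMatrix E q β` unfolds to `twoStepKernel (esMeasure E q β)`.
  exact ent_matMulVec_twoStepKernel_le _ (esMeasure_nonneg E q β hβ.le) (by linarith) hf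
    (hfact _ fun z => hf z.1)

/-- Spin/edge factorization of entropy for the Edwards–Sokal measure, with constant `C`,
implies entropy contraction at rate `1 - 1/C` for the Swendsen–Wang dynamics. -/
theorem stmt13 {V : Type*} [Fintype V] [DecidableEq V]
    (E : Finset (V × V)) (q : ℕ) (hq : 2 ≤ q) (β : ℝ) (hβ : 0 < β)
    (C : ℝ) (hC : 1 ≤ C)
    (hfact : ∀ f : ((V → Fin q) × Finset (V × V)) → ℝ, (∀ z, 0 ≤ f z) →
      ent (esMeasure E q β) f ≤
        C * (avgCondEnt (esMeasure E q β) Prod.fst f +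
             avgCondEnt (esMeasure E q β) Prod.snd f)) :
    ∀ f : (V → Fin q) → ℝ, (∀ σ, 0 ≤ f σ) →
      ent (pottsMeasure E q β) (matMulVec (swMatrix E q β) f) ≤
        (1 - 1 / C) * ent (pottsMeasure E q β) f :=
  stmt13_general E q β hβ C hC hfact
end

section
/- Let {X_t} be a Markov chain on a finite state space with positive semidefinite, reversible transition matrix with stationary distribution π, started from π conditioned on an event B. Then the hitting probability satisfies the spectral representation Pr(X_t ∈ B) = π(B) + (1−π(B))·Σ_ℓ κ_ℓ λ_ℓ^t, where λ_ℓ are the nonprincipal eigenvalues of the transition matrix, each κ_ℓ ≥ 0, and Σ_ℓ κ_ℓ = 1; in particular Pr(X_t ∈ B) ≥ π(B) for all t ≥ 0. -/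
open scoped Classical BigOperators

/-!
Conjugating by `√π` turns the reversible `P` into a symmetric positive semidefinite operator `S`
on `ℓ²(Ω)` that fixes `√π`, and `Pr(X_t ∈ B) = ⟪v, Sᵗ v⟫ / π(B)` with `v = √π · 1_B`.
Writing `v = π(B) √π + v'` with `v' ⟂ √π`, the cross terms vanish, so
`⟪v, Sᵗ v⟫ = π(B)² + ⟪v', Sᵗ v'⟫`; expanding `v'` in an orthonormal eigenbasis of `S` gives
`∑ ⟪uᵢ, v'⟫² μᵢᵗ`, whose weights sum to `‖v'‖² = π(B) (1 - π(B))`. The eigenvalues are `≥ 0`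
by positivity of `S` and `≤ 1` by the maximum principle for the stochastic matrix `P`.
-/

open scoped RealInnerProductSpace

namespace LinearMap.IsSymmetric

variable {E : Type*} [NormedAddCommGroup E] [InnerProductSpace ℝ E] {T : E →ₗ[ℝ] E}

theorem inner_pow_apply_self_eq_sum [FiniteDimensional ℝ E] (hT : T.IsSymmetric) {n : ℕ}
    (hn : Module.finrank ℝ E = n) (x : E) (t : ℕ) :
    ⟪x, (T ^ t) x⟫ = ∑ i, ⟪hT.eigenvectorBasis hn i, x⟫ ^ 2 * hT.eigenvalues hn i ^ t := by
  rw [← (hT.eigenvectorBasis hn).sum_inner_mul_inner]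
  refine Finset.sum_congr rfl fun i _ => ?_
  have hu := (hT.hasEigenvector_eigenvectorBasis hn i).pow_apply t
  rw [← hT.pow t, hu, RCLike.ofReal_real_eq_id, id_eq, real_inner_smul_left, real_inner_comm x]
  ring

theorem inner_pow_apply_self_eq_of_apply_eq_self (hT : T.IsSymmetric) {w : E} (hw : T w = w)
    (hw1 : ⟪w, w⟫ = 1) (x : E) (t : ℕ) :
    ⟪x, (T ^ t) x⟫ = ⟪w, x⟫ ^ 2 + ⟪x - ⟪w, x⟫ • w, (T ^ t) (x - ⟪w, x⟫ • w)⟫ := by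
  have hwt : (T ^ t) w = w := by
    rw [Module.End.pow_apply]; exact Function.iterate_fixed hw t
  have hsym : ⟪w, (T ^ t) x⟫ = ⟪w, x⟫ := by rw [← hT.pow t, hwt]
  simp only [map_sub, map_smul, hwt, inner_sub_left, inner_sub_right, real_inner_smul_left,
    real_inner_smul_right, hsym, hw1, real_inner_comm x w]
  ring

end LinearMap.IsSymmetric

theorem sqrt_mul_div_sqrt_comm {Ω : Type*} {P : Ω → Ω → ℝ} {π : Ω → ℝ} (hπ0 : ∀ x, 0 < π x)
    (hrev : ∀ x y, π x * P x y = π y * P y x) (x y : Ω) :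
    √(π x) * P x y / √(π y) = √(π y) * P y x / √(π x) := by
  rw [div_eq_div_iff (Real.sqrt_pos.2 (hπ0 y)).ne' (Real.sqrt_pos.2 (hπ0 x)).ne']
  linear_combination P x y * Real.mul_self_sqrt (hπ0 x).le -
    P y x * Real.mul_self_sqrt (hπ0 y).le + hrev x y

section ReversibleChain

variable {Ω : Type*} [Fintype Ω] {P : Ω → Ω → ℝ} {π : Ω → ℝ}

theorem abs_le_one_of_matMulVec_eq_smul (hP0 : ∀ x y, 0 ≤ P x y) (hP1 : ∀ x, ∑ y, P x y = 1)
    {μ : ℝ} {g : Ω → ℝ} (hg : g ≠ 0) (heig : ∀ x, matMulVec P g x = μ * g x) : |μ| ≤ 1 := by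
  obtain ⟨x₁, hx₁⟩ := Function.ne_iff.mp hg
  have : Nonempty Ω := ⟨x₁⟩
  obtain ⟨x₀, hmax⟩ := Finite.exists_max fun x => |g x|
  have hpos : 0 < |g x₀| := (abs_pos.mpr hx₁).trans_le (hmax x₁)
  refine le_of_mul_le_mul_right ?_ hpos
  calc |μ| * |g x₀| = |∑ y, P x₀ y * g y| := by rw [← abs_mul, ← heig x₀]; rfl
    _ ≤ ∑ y, P x₀ y * |g y| := by
        refine (Finset.abs_sum_le_sum_abs _ _).trans_eq (Finset.sum_congr rfl fun y _ => ?_)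
        rw [abs_mul, abs_of_nonneg (hP0 x₀ y)]
    _ ≤ ∑ y, P x₀ y * |g x₀| :=
        Finset.sum_le_sum fun y _ => mul_le_mul_of_nonneg_left (hmax y) (hP0 x₀ y)
    _ = 1 * |g x₀| := by rw [← Finset.sum_mul, hP1 x₀]

/-- `D^{1/2} P D^{-1/2}` with `D = diag π`: similar to `P`, and symmetric iff `P` is reversible. -/
noncomputable def symmetrizedOp (π : Ω → ℝ) (P : Ω → Ω → ℝ) :
    EuclideanSpace ℝ Ω →ₗ[ℝ] EuclideanSpace ℝ Ω :=
  Matrix.toEuclideanLin (Matrix.of fun x y => √(π x) * P x y / √(π y))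

theorem symmetrizedOp_apply (f : EuclideanSpace ℝ Ω) (x : Ω) :
    symmetrizedOp π P f x = ∑ y, √(π x) * P x y / √(π y) * f y := by
  simp [symmetrizedOp, Matrix.toLpLin_apply, Matrix.mulVec, dotProduct]

noncomputable def sqrtOn (π : Ω → ℝ) (B : Finset Ω) : EuclideanSpace ℝ Ω :=
  WithLp.toLp 2 fun x => if x ∈ B then √(π x) else 0

theorem inner_sqrtOn (B : Finset Ω) (f : EuclideanSpace ℝ Ω) :
    ⟪sqrtOn π B, f⟫ = ∑ x ∈ B, √(π x) * f x := by
  simp [sqrtOn, PiLp.inner_apply, Finset.sum_ite_mem, mul_comm]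

theorem inner_sqrtOn_sqrtOn (hπ : ∀ x, 0 ≤ π x) {A B : Finset Ω} (hBA : B ⊆ A) :
    ⟪sqrtOn π A, sqrtOn π B⟫ = ∑ x ∈ B, π x := by
  rw [real_inner_comm, inner_sqrtOn]
  refine Finset.sum_congr rfl fun x hx => ?_
  simp [sqrtOn, hBA hx, Real.mul_self_sqrt (hπ x)]

theorem isSymmetric_symmetrizedOp (hπ0 : ∀ x, 0 < π x)
    (hrev : ∀ x y, π x * P x y = π y * P y x) :
    (symmetrizedOp π P).IsSymmetric :=
  Matrix.isSymmetric_toEuclideanLin_iff.mpr <| Matrix.IsHermitian.ext fun x y => by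
    simpa using sqrt_mul_div_sqrt_comm hπ0 hrev y x

theorem matMulVec_div_sqrt (hπ0 : ∀ x, 0 < π x) (f : EuclideanSpace ℝ Ω) (x : Ω) :
    matMulVec P (fun y => f y / √(π y)) x = symmetrizedOp π P f x / √(π x) := by
  have hx := (Real.sqrt_pos.2 (hπ0 x)).ne'
  rw [symmetrizedOp_apply, Finset.sum_div]
  refine Finset.sum_congr rfl fun y _ => ?_
  field_simp

theorem isPositive_symmetrizedOp (hπ0 : ∀ x, 0 < π x)
    (hrev : ∀ x y, π x * P x y = π y * P y x)
    (hpsd : ∀ f : Ω → ℝ, 0 ≤ ∑ x, π x * f x * matMulVec P f x) :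
    (symmetrizedOp π P).IsPositive := by
  refine (LinearMap.isPositive_iff _).mpr ⟨isSymmetric_symmetrizedOp hπ0 hrev,
    fun f => (hpsd fun y => f y / √(π y)).trans_eq ?_⟩
  simp only [PiLp.inner_apply, RCLike.inner_apply, conj_trivial, matMulVec_div_sqrt hπ0]
  refine Finset.sum_congr rfl fun x _ => ?_
  have hx := (Real.sqrt_pos.2 (hπ0 x)).ne'
  field_simp
  rw [Real.sq_sqrt (hπ0 x).le]
  ring

theorem symmetrizedOp_sqrtOn_univ (hπ0 : ∀ x, 0 < π x) (hP1 : ∀ x, ∑ y, P x y = 1) :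
    symmetrizedOp π P (sqrtOn π Finset.univ) = sqrtOn π Finset.univ := by
  ext x
  simp only [symmetrizedOp_apply, sqrtOn, Finset.mem_univ, if_true]
  simp_rw [div_mul_cancel₀ _ (Real.sqrt_pos.2 (hπ0 _)).ne', ← Finset.mul_sum, hP1, mul_one]

theorem stepDist_sqrt_mul (hπ0 : ∀ x, 0 < π x) (hrev : ∀ x y, π x * P x y = π y * P y x)
    (f : EuclideanSpace ℝ Ω) :
    stepDist P (fun x => √(π x) * f x) = fun x => √(π x) * symmetrizedOp π P f x := by
  funext x
  rw [stepDist, symmetrizedOp_apply, Finset.mul_sum]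
  refine Finset.sum_congr rfl fun z _ => ?_
  rw [sqrt_mul_div_sqrt_comm hπ0 hrev x z]
  field_simp [(Real.sqrt_pos.2 (hπ0 x)).ne']

theorem iterate_stepDist_sqrt_mul (hπ0 : ∀ x, 0 < π x)
    (hrev : ∀ x y, π x * P x y = π y * P y x) (f : EuclideanSpace ℝ Ω) (t : ℕ) :
    (stepDist P)^[t] (fun x => √(π x) * f x) =
      fun x => √(π x) * (symmetrizedOp π P ^ t) f x := by
  have h : Function.Semiconj (fun (f : EuclideanSpace ℝ Ω) x => √(π x) * f x)
      (symmetrizedOp π P) (stepDist P) :=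
    fun f => (stepDist_sqrt_mul hπ0 hrev f).symm
  rw [Module.End.pow_apply]
  exact (h.iterate_right t f).symm

theorem sum_iterate_stepDist_eq_inner_sqrtOn (hπ0 : ∀ x, 0 < π x)
    (hrev : ∀ x y, π x * P x y = π y * P y x) (B : Finset Ω) (t : ℕ) :
    ∑ x ∈ B, (stepDist P)^[t] (fun y => if y ∈ B then π y / ∑ z ∈ B, π z else 0) x =
      ⟪sqrtOn π B, (symmetrizedOp π P ^ t) (sqrtOn π B)⟫ / ∑ x ∈ B, π x := by
  have h0 : (fun y => if y ∈ B then π y / ∑ z ∈ B, π z else 0) =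
      fun y => √(π y) * ((∑ z ∈ B, π z)⁻¹ • sqrtOn π B) y := by
    funext y
    by_cases hy : y ∈ B
    · simp only [sqrtOn, hy, if_true, PiLp.smul_apply, smul_eq_mul]
      rw [mul_left_comm, Real.mul_self_sqrt (hπ0 y).le, div_eq_inv_mul]
    · simp [sqrtOn, hy]
  rw [h0, iterate_stepDist_sqrt_mul hπ0 hrev, map_smul]
  beta_reduce
  rw [← inner_sqrtOn, real_inner_smul_right, inv_mul_eq_div]

theorem exists_matMulVec_eq_eigenvalue_mul (hπ0 : ∀ x, 0 < π x)
    (hT : (symmetrizedOp π P).IsSymmetric) {n : ℕ} (hn : Module.finrank ℝ (EuclideanSpace ℝ Ω) = n) (i : Fin n) :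
    ∃ g : Ω → ℝ, g ≠ 0 ∧ ∀ x, matMulVec P g x = hT.eigenvalues hn i * g x := by
  refine ⟨fun x => hT.eigenvectorBasis hn i x / √(π x), fun h0 => ?_, fun x => ?_⟩
  · refine (hT.eigenvectorBasis hn).orthonormal.ne_zero i (PiLp.ext fun x => ?_)
    simpa [(Real.sqrt_pos.2 (hπ0 x)).ne'] using congrFun h0 x
  · rw [matMulVec_div_sqrt hπ0, hT.apply_eigenvectorBasis, PiLp.smul_apply, smul_eq_mul,
      mul_div_assoc]
    rfl

theorem eigenvalues_symmetrizedOp_le_one (hπ0 : ∀ x, 0 < π x) (hP0 : ∀ x y, 0 ≤ P x y)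
    (hP1 : ∀ x, ∑ y, P x y = 1) (hT : (symmetrizedOp π P).IsSymmetric) {n : ℕ}
    (hn : Module.finrank ℝ (EuclideanSpace ℝ Ω) = n) (i : Fin n) : hT.eigenvalues hn i ≤ 1 :=
  let ⟨_, hg, heig⟩ := exists_matMulVec_eq_eigenvalue_mul hπ0 hT hn i
  le_of_abs_le (abs_le_one_of_matMulVec_eq_smul hP0 hP1 hg heig)

/-- The component of `sqrtOn π B` orthogonal to the unit vector `sqrtOn π univ`. -/
noncomputable def centeredSqrtOn (π : Ω → ℝ) (B : Finset Ω) : EuclideanSpace ℝ Ω :=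
  sqrtOn π B - (∑ x ∈ B, π x) • sqrtOn π Finset.univ

theorem norm_centeredSqrtOn_sq (hπ : ∀ x, 0 ≤ π x) (hπ1 : ∑ x, π x = 1) (B : Finset Ω) :
    ‖centeredSqrtOn π B‖ ^ 2 = (∑ x ∈ B, π x) * (1 - ∑ x ∈ B, π x) := by
  rw [← real_inner_self_eq_norm_sq, centeredSqrtOn]
  simp only [inner_sub_left, inner_sub_right, real_inner_smul_left, real_inner_smul_right,
    real_inner_comm (sqrtOn π Finset.univ) (sqrtOn π B),
    inner_sqrtOn_sqrtOn hπ (Finset.subset_univ B), inner_sqrtOn_sqrtOn hπ (subset_refl _), hπ1]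
  ring

theorem inner_pow_sqrtOn_eq (hπ0 : ∀ x, 0 < π x) (hπ1 : ∑ x, π x = 1)
    (hP1 : ∀ x, ∑ y, P x y = 1) (hT : (symmetrizedOp π P).IsSymmetric) {n : ℕ}
    (hn : Module.finrank ℝ (EuclideanSpace ℝ Ω) = n) (B : Finset Ω) (t : ℕ) :
    ⟪sqrtOn π B, (symmetrizedOp π P ^ t) (sqrtOn π B)⟫ = (∑ x ∈ B, π x) ^ 2 +
      ∑ i, ⟪hT.eigenvectorBasis hn i, centeredSqrtOn π B⟫ ^ 2 * hT.eigenvalues hn i ^ t := by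
  have hπ x := (hπ0 x).le
  have hww : ⟪sqrtOn π Finset.univ, sqrtOn π Finset.univ⟫ = 1 :=
    (inner_sqrtOn_sqrtOn hπ subset_rfl).trans hπ1
  rw [hT.inner_pow_apply_self_eq_of_apply_eq_self (symmetrizedOp_sqrtOn_univ hπ0 hP1) hww,
    inner_sqrtOn_sqrtOn hπ (Finset.subset_univ B), hT.inner_pow_apply_self_eq_sum, centeredSqrtOn]

end ReversibleChain

/-- Spectral representation of the hitting probability for a reversible, positive
semidefinite chain started from `π` conditioned on `B`:
`Pr(X_t ∈ B) = π(B) + (1-π(B)) Σ_ℓ κ_ℓ λ_ℓ^t` with `κ_ℓ ≥ 0`, `Σ κ_ℓ = 1`, and each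
`λ_ℓ` a nonprincipal eigenvalue of `P` lying in `[0,1]`; in particular
`Pr(X_t ∈ B) ≥ π(B)` for all `t`. -/
theorem stmt16 {Ω : Type*} [Fintype Ω]
    (P : Ω → Ω → ℝ) (π : Ω → ℝ) (B : Finset Ω)
    (hP0 : ∀ x y, 0 ≤ P x y) (hP1 : ∀ x, ∑ y, P x y = 1)
    (hπ0 : ∀ x, 0 < π x) (hπ1 : ∑ x, π x = 1)
    (hrev : ∀ x y, π x * P x y = π y * P y x)
    (hpsd : ∀ f : Ω → ℝ, 0 ≤ ∑ x, π x * f x * matMulVec P f x)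
    (hB0 : 0 < ∑ x ∈ B, π x) (hB1 : ∑ x ∈ B, π x < 1) :
    ∃ (m : ℕ) (κ lam : Fin m → ℝ),
      (∀ ℓ, 0 ≤ κ ℓ) ∧ (∑ ℓ, κ ℓ = 1) ∧
      (∀ ℓ, 0 ≤ lam ℓ ∧ lam ℓ ≤ 1) ∧
      (∀ ℓ, ∃ g : Ω → ℝ, g ≠ 0 ∧ ∀ x, matMulVec P g x = lam ℓ * g x) ∧
      (∀ t : ℕ,
        (∑ x ∈ B, (stepDist P)^[t] (fun y => if y ∈ B then π y / ∑ z ∈ B, π z else 0) x) =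
          (∑ x ∈ B, π x) + (1 - ∑ x ∈ B, π x) * ∑ ℓ, κ ℓ * lam ℓ ^ t) ∧
      (∀ t : ℕ,
        ∑ x ∈ B, π x ≤
          ∑ x ∈ B, (stepDist P)^[t] (fun y => if y ∈ B then π y / ∑ z ∈ B, π z else 0) x) := by
  have hT := isPositive_symmetrizedOp hπ0 hrev hpsd
  set πB := ∑ x ∈ B, π x with hπB
  set u := hT.isSymmetric.eigenvectorBasis rfl
  set μ := hT.isSymmetric.eigenvalues rfl
  set c := fun i => ⟪u i, centeredSqrtOn π B⟫
  have hD : 0 < πB * (1 - πB) := mul_pos hB0 (sub_pos.2 hB1)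
  have hc : ∑ i, c i ^ 2 = πB * (1 - πB) :=
    (u.sum_sq_inner_right _).trans (norm_centeredSqrtOn_sq (fun x => (hπ0 x).le) hπ1 B)
  have hexp (t : ℕ) : ⟪sqrtOn π B, (symmetrizedOp π P ^ t) (sqrtOn π B)⟫ =
      πB ^ 2 + ∑ i, c i ^ 2 * μ i ^ t :=
    inner_pow_sqrtOn_eq hπ0 hπ1 hP1 hT.isSymmetric rfl B t
  have hprob (t : ℕ) : ∑ x ∈ B, (stepDist P)^[t] (fun y => if y ∈ B then π y / πB else 0) x =
      πB + (1 - πB) * ∑ i, c i ^ 2 / (πB * (1 - πB)) * μ i ^ t := by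
    rw [sum_iterate_stepDist_eq_inner_sqrtOn hπ0 hrev, ← hπB, hexp]
    simp only [div_mul_eq_mul_div, ← Finset.sum_div]
    field_simp [(sub_pos.2 hB1).ne']
  refine ⟨_, fun i => c i ^ 2 / (πB * (1 - πB)), μ, fun i => by positivity,
    by rw [← Finset.sum_div, hc, div_self hD.ne'],
    fun i => ⟨hT.nonneg_eigenvalues rfl i,
      eigenvalues_symmetrizedOp_le_one hπ0 hP0 hP1 hT.isSymmetric rfl i⟩,
    exists_matMulVec_eq_eigenvalue_mul hπ0 hT.isSymmetric rfl, hprob, fun t => ?_⟩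
  rw [hprob t]
  refine le_add_of_nonneg_right (mul_nonneg (sub_nonneg.2 hB1.le) (Finset.sum_nonneg ?_))
  exact fun i _ => mul_nonneg (by positivity) (pow_nonneg (hT.nonneg_eigenvalues rfl i) t)
end

section
/- For the single-site measure ν_x(·|σ_O) on a pair (σ_x, A_x) ∈ [q] × {0,1}^{deg(x)} arising from the Edwards-Sokal measure conditioned on the odd spins, there exists a constant δ₁ > 0, depending only on q, p and the degree, such that for all nonnegative functions f on [q] × {0,1}^{deg(x)}: ν_x[Ent_x(f|σ)|σ_O] + ν_x[Ent_x(f|σ_O,A)|σ_O] ≥ δ₁·Ent_x(f|σ_O). -/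
open scoped Classical BigOperators

/-- Weight of the single-site Edwards–Sokal measure at a vertex of degree `d`, with the
neighboring spins fixed to `τ`: sample the spin from the conditional Potts distribution
(`(1-p)^{#disagreements}`, where `1-p = e^{-β}`), then each incident edge is open with
probability `p` if monochromatic and closed otherwise. -/
noncomputable def siteWeight (q d : ℕ) (p : ℝ) (τ : Fin d → Fin q)
    (z : Fin q × (Fin d → Bool)) : ℝ :=
  (1 - p) ^ (Finset.univ.filter (fun i => τ i ≠ z.1)).card *
    ∏ i, (if τ i = z.1 then (if z.2 i then p else 1 - p) else (if z.2 i then 0 else 1))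

noncomputable def siteMeasure (q d : ℕ) (p : ℝ) (τ : Fin d → Fin q)
    (z : Fin q × (Fin d → Bool)) : ℝ :=
  siteWeight q d p τ z / ∑ w : Fin q × (Fin d → Bool), siteWeight q d p τ w


/-- pointwise: for `f ≥ 0`, `m > 0`: `2f - 2√m·√f ≤ f(log f - log m)`. -/
lemma pt_lower (f m : ℝ) (hf : 0 ≤ f) (hm : 0 < m) :
    2*f - 2*Real.sqrt m * Real.sqrt f ≤ f * (Real.log f - Real.log m) := by
  rcases eq_or_lt_of_le hf with h0 | hfpos
  · simp [← h0]
  · have hr : (0:ℝ) < Real.sqrt m := Real.sqrt_pos.2 hm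
    have hs : (0:ℝ) < Real.sqrt f := Real.sqrt_pos.2 hfpos
    have hlog : Real.log (Real.sqrt m) - Real.log (Real.sqrt f) ≤ Real.sqrt m / Real.sqrt f - 1 := by
      have h := Real.log_le_sub_one_of_pos (div_pos hr hs)
      rwa [Real.log_div hr.ne' hs.ne'] at h
    have hlf : Real.log f = 2 * Real.log (Real.sqrt f) := by rw [Real.log_sqrt hfpos.le]; ring
    have hlm : Real.log m = 2 * Real.log (Real.sqrt m) := by rw [Real.log_sqrt hm.le]; ring
    have hsq : Real.sqrt f * Real.sqrt f = f := Real.mul_self_sqrt hfpos.le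
    have h2 := mul_le_mul_of_nonneg_left hlog (le_of_lt (mul_pos hs hs))
    have h3 : Real.sqrt f * Real.sqrt f * (Real.sqrt m / Real.sqrt f) = Real.sqrt f * Real.sqrt m := by
      field_simp
    have h5 : Real.sqrt f * Real.sqrt f * (Real.sqrt m / Real.sqrt f - 1)
        = Real.sqrt f * Real.sqrt m - f := by rw [mul_sub, mul_one, h3, hsq]
    rw [h5] at h2
    rw [hsq] at h2
    have h7 : f * (Real.log f - Real.log m)
        = -2 * (f * (Real.log (Real.sqrt m) - Real.log (Real.sqrt f))) := by
      rw [hlf, hlm]; ring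
    rw [h7]
    nlinarith [h2]

/-- pointwise: for `f ≥ 0`, `b > 0`: `f log f - f log b - f + b ≤ (f-b)²/b`. -/
lemma pt_upper (f b : ℝ) (hf : 0 ≤ f) (hb : 0 < b) :
    f * Real.log f - f * Real.log b - f + b ≤ (f - b)^2 / b := by
  rcases eq_or_lt_of_le hf with h0 | hfpos
  · rw [← h0]; simp; rw [le_div_iff₀ hb]; nlinarith
  · have h := Real.log_le_sub_one_of_pos (div_pos hfpos hb)
    rw [Real.log_div hfpos.ne' hb.ne'] at h
    have h2 := mul_le_mul_of_nonneg_left h hf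
    rw [le_div_iff₀ hb]
    have h3 : f * (f / b) * b = f * f := by field_simp
    nlinarith [h2, h3]

/-- Per-block: weighted relative variance of √f is below weighted relative entropy of f. -/
lemma blockIneq {Ω : Type*} [Fintype Ω] (s : Finset Ω) (ν f : Ω → ℝ)
    (hν : ∀ x, 0 ≤ ν x) (hf : ∀ x, 0 ≤ f x) :
    ∑ x ∈ s, ν x * (Real.sqrt (f x) - (∑ y ∈ s, ν y * Real.sqrt (f y)) / (∑ y ∈ s, ν y))^2 ≤
      ∑ x ∈ s, ν x * f x *
        (Real.log (f x) - Real.log ((∑ y ∈ s, ν y * f y) / (∑ y ∈ s, ν y))) := by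
  set S := ∑ y ∈ s, ν y with hS
  set b := ∑ y ∈ s, ν y * f y with hb
  set t := ∑ y ∈ s, ν y * Real.sqrt (f y) with ht
  have hS0 : 0 ≤ S := Finset.sum_nonneg (fun y _ => hν y)
  have hb0 : 0 ≤ b := Finset.sum_nonneg (fun y _ => mul_nonneg (hν y) (hf y))
  rcases eq_or_lt_of_le hS0 with hSz | hSpos
  · -- S = 0 : all ν x = 0 on s
    have hz : ∀ x ∈ s, ν x = 0 :=
      (Finset.sum_eq_zero_iff_of_nonneg (fun y _ => hν y)).1 hSz.symm
    have l : ∀ x ∈ s, ν x * (Real.sqrt (f x) - t / S)^2 = 0 := fun x hx => by rw [hz x hx]; ring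
    have r : ∀ x ∈ s, ν x * f x * (Real.log (f x) - Real.log (b / S)) = 0 :=
      fun x hx => by rw [hz x hx]; ring
    rw [Finset.sum_congr rfl l, Finset.sum_congr rfl r]
  rcases eq_or_lt_of_le hb0 with hbz | hbpos
  · -- b = 0 : ν x * f x = 0 on s
    have hz : ∀ x ∈ s, ν x * f x = 0 :=
      (Finset.sum_eq_zero_iff_of_nonneg (fun y _ => mul_nonneg (hν y) (hf y))).1 hbz.symm
    have htz : t = 0 := by
      apply Finset.sum_eq_zero
      intro x hx
      rcases mul_eq_zero.1 (hz x hx) with h | h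
      · rw [h, zero_mul]
      · rw [h, Real.sqrt_zero, mul_zero]
    have l : ∀ x ∈ s, ν x * (Real.sqrt (f x) - t / S)^2 = 0 := by
      intro x hx
      rw [htz, zero_div, sub_zero, Real.sq_sqrt (hf x), hz x hx]
    have r : ∀ x ∈ s, ν x * f x * (Real.log (f x) - Real.log (b / S)) = 0 :=
      fun x hx => by rw [hz x hx, zero_mul]
    rw [Finset.sum_congr rfl l, Finset.sum_congr rfl r]
  -- main case
  set m := b / S with hm
  set M := t / S with hM
  have hmpos : 0 < m := div_pos hbpos hSpos
  -- lower bound for the entropy side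
  have step1 : 2*b - 2*Real.sqrt m * t ≤
      ∑ x ∈ s, ν x * f x * (Real.log (f x) - Real.log m) := by
    have pt : ∀ x ∈ s, ν x * (2 * f x - 2*Real.sqrt m * Real.sqrt (f x)) ≤
        ν x * f x * (Real.log (f x) - Real.log m) := by
      intro x _
      have h := pt_lower (f x) m (hf x) hmpos
      calc ν x * (2 * f x - 2*Real.sqrt m * Real.sqrt (f x))
          ≤ ν x * (f x * (Real.log (f x) - Real.log m)) := by
            apply mul_le_mul_of_nonneg_left _ (hν x); linarith
        _ = ν x * f x * (Real.log (f x) - Real.log m) := by ring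
    calc 2*b - 2*Real.sqrt m * t
        = ∑ x ∈ s, ν x * (2 * f x - 2*Real.sqrt m * Real.sqrt (f x)) := by
          rw [hb, ht]
          rw [Finset.mul_sum, Finset.mul_sum]
          rw [← Finset.sum_sub_distrib]
          apply Finset.sum_congr rfl
          intro x _; ring
      _ ≤ _ := Finset.sum_le_sum pt
  -- exact value of the variance side
  have step2 : ∑ x ∈ s, ν x * (Real.sqrt (f x) - M)^2 = b - t^2/S := by
    have e1 : ∀ x ∈ s, ν x * (Real.sqrt (f x) - M)^2
        = ν x * f x - (2*M) * (ν x * Real.sqrt (f x)) + M^2 * ν x := by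
      intro x _
      have hsq : Real.sqrt (f x) * Real.sqrt (f x) = f x := Real.mul_self_sqrt (hf x)
      linear_combination (ν x) * hsq
    rw [Finset.sum_congr rfl e1]
    rw [Finset.sum_add_distrib, Finset.sum_sub_distrib, ← Finset.mul_sum, ← Finset.mul_sum]
    rw [← hb, ← ht, ← hS, hM]
    field_simp
    ring
  -- compare
  have hbmS : m * S = b := by rw [hm]; field_simp
  have hmm : Real.sqrt m * Real.sqrt m = m := Real.mul_self_sqrt hmpos.le
  have key : b*S - 2*Real.sqrt m*t*S + t^2 = (Real.sqrt m*S - t)^2 := by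
    linear_combination (-S)*hbmS - S^2*hmm
  have step3 : b - t^2/S ≤ 2*b - 2*Real.sqrt m * t := by
    have hdiv : t^2/S * S = t^2 := div_mul_cancel₀ _ hSpos.ne'
    nlinarith [sq_nonneg (Real.sqrt m*S - t), key, hdiv, hSpos]
  rw [step2]
  linarith [step1, step3]
/-- Averaged conditional variance of √f is below averaged conditional entropy of f. -/
lemma avgCondEnt_ge {Ω α : Type*} [Fintype Ω] [Fintype α] (ν f : Ω → ℝ) (g : Ω → α)
    (hν : ∀ x, 0 ≤ ν x) (hf : ∀ x, 0 ≤ f x) :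
    ∑ x, ν x * (Real.sqrt (f x) - condMean ν g (fun z => Real.sqrt (f z)) x)^2 ≤
      avgCondEnt ν g f := by
  unfold avgCondEnt
  rw [← Finset.sum_fiberwise Finset.univ g
    (fun x => ν x * f x * (Real.log (f x) - Real.log (condMean ν g f x)))]
  rw [← Finset.sum_fiberwise Finset.univ g
    (fun x => ν x * (Real.sqrt (f x) - condMean ν g (fun z => Real.sqrt (f z)) x)^2)]
  apply Finset.sum_le_sum
  intro a _
  have hmem : ∀ x ∈ Finset.univ.filter (fun x => g x = a), g x = a :=
    fun x hx => (Finset.mem_filter.1 hx).2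
  have hcond : ∀ (F : Ω → ℝ), ∀ x ∈ Finset.univ.filter (fun x => g x = a),
      condMean ν g F x = (∑ y ∈ Finset.univ.filter (fun x => g x = a), ν y * F y) /
        (∑ y ∈ Finset.univ.filter (fun x => g x = a), ν y) := by
    intro F x hx
    unfold condMean
    rw [hmem x hx, Finset.sum_filter, Finset.sum_filter]
  have l : ∀ x ∈ Finset.univ.filter (fun x => g x = a),
      ν x * (Real.sqrt (f x) - condMean ν g (fun z => Real.sqrt (f z)) x)^2
      = ν x * (Real.sqrt (f x) - (∑ y ∈ Finset.univ.filter (fun x => g x = a),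
          ν y * Real.sqrt (f y)) / (∑ y ∈ Finset.univ.filter (fun x => g x = a), ν y))^2 := by
    intro x hx; rw [hcond (fun z => Real.sqrt (f z)) x hx]
  have r : ∀ x ∈ Finset.univ.filter (fun x => g x = a),
      ν x * f x * (Real.log (f x) - Real.log (condMean ν g f x))
      = ν x * f x * (Real.log (f x) - Real.log ((∑ y ∈ Finset.univ.filter (fun x => g x = a),
          ν y * f y) / (∑ y ∈ Finset.univ.filter (fun x => g x = a), ν y))) := by
    intro x hx; rw [hcond f x hx]
  rw [Finset.sum_congr rfl l, Finset.sum_congr rfl r]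
  exact blockIneq _ ν f hν hf

/-- Entropy is bounded by a constant times the variance of √f. -/
lemma ent_le_var {Ω : Type*} [Fintype Ω] (ν f : Ω → ℝ) (π₀ : ℝ) (hπ : 0 < π₀)
    (hν0 : ∀ z, 0 ≤ ν z) (hν1 : ∑ z, ν z = 1)
    (hsupp : ∀ z, ν z = 0 ∨ π₀ ≤ ν z) (hf : ∀ z, 0 ≤ f z) :
    ent ν f ≤ 2 * (1 + 1/Real.sqrt π₀)^2 *
      ∑ z, ν z * (Real.sqrt (f z) - ∑ w, ν w * Real.sqrt (f w))^2 := by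
  set b := ∑ z, ν z * f z with hb
  set t := ∑ z, ν z * Real.sqrt (f z) with ht
  set K : ℝ := (1 + 1/Real.sqrt π₀)^2 with hK
  have hK0 : 0 ≤ K := sq_nonneg _
  have hb0 : 0 ≤ b := Finset.sum_nonneg (fun z _ => mul_nonneg (hν0 z) (hf z))
  have hVar0 : 0 ≤ ∑ z, ν z * (Real.sqrt (f z) - t)^2 :=
    Finset.sum_nonneg (fun z _ => mul_nonneg (hν0 z) (sq_nonneg _))
  rcases eq_or_lt_of_le hb0 with hbz | hbpos
  · -- b = 0 : entropy is zero
    have hz : ∀ z ∈ Finset.univ, ν z * f z = 0 :=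
      (Finset.sum_eq_zero_iff_of_nonneg (fun y _ => mul_nonneg (hν0 y) (hf y))).1 hbz.symm
    have hent : ent ν f = 0 := by
      unfold ent
      rw [← hb, ← hbz]
      simp only [Real.log_zero, mul_zero, zero_mul, sub_zero]
      apply Finset.sum_eq_zero
      intro z hzz
      rw [hz z hzz, zero_mul]
    rw [hent]
    positivity
  · -- b > 0
    have hentform : ent ν f = ∑ z, (ν z * f z * Real.log (f z)
        - ν z * f z * Real.log b - ν z * f z + ν z * b) := by
      unfold ent
      rw [Finset.sum_add_distrib, Finset.sum_sub_distrib, Finset.sum_sub_distrib,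
        ← Finset.sum_mul, ← Finset.sum_mul, hν1, ← hb]
      ring
    have pt : ∀ z ∈ Finset.univ, ν z * f z * Real.log (f z)
        - ν z * f z * Real.log b - ν z * f z + ν z * b
        ≤ ν z * (K * (Real.sqrt (f z) - Real.sqrt b)^2) := by
      intro z _
      rcases hsupp z with h0 | hlb
      · simp [h0]
      · have hνz : 0 < ν z := lt_of_lt_of_le hπ hlb
        -- f z ≤ b / π₀
        have hfz : ν z * f z ≤ b :=
          Finset.single_le_sum (fun y _ => mul_nonneg (hν0 y) (hf y)) (Finset.mem_univ z)
        have hfb : f z ≤ b / π₀ := by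
          rw [le_div_iff₀ hπ]
          calc f z * π₀ ≤ f z * ν z := by
                apply mul_le_mul_of_nonneg_left hlb (hf z)
            _ ≤ b := by linarith [hfz]
        -- pointwise entropy bound
        have h1 : f z * Real.log (f z) - f z * Real.log b - f z + b ≤ (f z - b)^2 / b :=
          pt_upper (f z) b (hf z) hbpos
        -- (f z - b)^2/b ≤ K (√f z - √b)^2
        have hsf : Real.sqrt (f z) ≤ Real.sqrt b / Real.sqrt π₀ := by
          have h := Real.sqrt_le_sqrt hfb
          rwa [Real.sqrt_div hb0 π₀] at h
        have hsqf : Real.sqrt (f z) * Real.sqrt (f z) = f z := Real.mul_self_sqrt (hf z)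
        have hsqb : Real.sqrt b * Real.sqrt b = b := Real.mul_self_sqrt hb0
        have hsqπ : Real.sqrt π₀ * Real.sqrt π₀ = π₀ := Real.mul_self_sqrt hπ.le
        have hsb0 : 0 ≤ Real.sqrt b := Real.sqrt_nonneg _
        have hsπ : 0 < Real.sqrt π₀ := Real.sqrt_pos.2 hπ
        have h2 : (f z - b)^2 / b ≤ K * (Real.sqrt (f z) - Real.sqrt b)^2 := by
          rw [div_le_iff₀ hbpos]
          have hfact : f z - b = (Real.sqrt (f z) - Real.sqrt b) * (Real.sqrt (f z) + Real.sqrt b) := by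
            linear_combination hsqb - hsqf
          have hsum : (Real.sqrt (f z) + Real.sqrt b)^2 ≤ K * b := by
            have : Real.sqrt (f z) + Real.sqrt b ≤ (1 + 1/Real.sqrt π₀) * Real.sqrt b := by
              have : Real.sqrt b / Real.sqrt π₀ = (1/Real.sqrt π₀) * Real.sqrt b := by ring
              linarith [hsf, this]
            calc (Real.sqrt (f z) + Real.sqrt b)^2 ≤ ((1 + 1/Real.sqrt π₀) * Real.sqrt b)^2 := by
                  have h0 : 0 ≤ Real.sqrt (f z) + Real.sqrt b :=
                    add_nonneg (Real.sqrt_nonneg _) hsb0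
                  exact pow_le_pow_left₀ h0 this 2
              _ = K * b := by rw [hK]; linear_combination (1+1/Real.sqrt π₀)^2 * hsqb
          calc (f z - b)^2 = (Real.sqrt (f z) - Real.sqrt b)^2 * (Real.sqrt (f z) + Real.sqrt b)^2 := by
                rw [hfact]; ring
            _ ≤ (Real.sqrt (f z) - Real.sqrt b)^2 * (K * b) := by
                apply mul_le_mul_of_nonneg_left hsum (sq_nonneg _)
            _ = K * (Real.sqrt (f z) - Real.sqrt b)^2 * b := by ring
        calc ν z * f z * Real.log (f z) - ν z * f z * Real.log b - ν z * f z + ν z * b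
            = ν z * (f z * Real.log (f z) - f z * Real.log b - f z + b) := by ring
          _ ≤ ν z * ((f z - b)^2 / b) := mul_le_mul_of_nonneg_left (by linarith) hνz.le
          _ ≤ ν z * (K * (Real.sqrt (f z) - Real.sqrt b)^2) :=
              mul_le_mul_of_nonneg_left h2 hνz.le
    have hbd : ent ν f ≤ K * ∑ z, ν z * (Real.sqrt (f z) - Real.sqrt b)^2 := by
      rw [hentform]
      calc ∑ z, (ν z * f z * Real.log (f z) - ν z * f z * Real.log b - ν z * f z + ν z * b)
          ≤ ∑ z, ν z * (K * (Real.sqrt (f z) - Real.sqrt b)^2) := Finset.sum_le_sum pt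
        _ = K * ∑ z, ν z * (Real.sqrt (f z) - Real.sqrt b)^2 := by
            rw [Finset.mul_sum]; apply Finset.sum_congr rfl; intro z _; ring
    -- ∑ ν (√f - √b)² ≤ 2 Var
    have expand : ∀ c : ℝ, ∑ z, ν z * (Real.sqrt (f z) - c)^2
        = (∑ z, ν z * f z) - 2*c*t + c^2 := by
      intro c
      have e1 : ∀ z ∈ Finset.univ, ν z * (Real.sqrt (f z) - c)^2
          = ν z * f z - (2*c) * (ν z * Real.sqrt (f z)) + c^2 * ν z := by
        intro z _
        have hsq : Real.sqrt (f z) * Real.sqrt (f z) = f z := Real.mul_self_sqrt (hf z)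
        linear_combination (ν z) * hsq
      rw [Finset.sum_congr rfl e1, Finset.sum_add_distrib, Finset.sum_sub_distrib,
        ← Finset.mul_sum, ← Finset.mul_sum, hν1, ← ht]
      ring
    have ht0 : 0 ≤ t := Finset.sum_nonneg (fun z _ => mul_nonneg (hν0 z) (Real.sqrt_nonneg _))
    have htb : t^2 ≤ b := by
      have := expand t
      rw [← hb] at this
      nlinarith [hVar0, this]
    have htsb : t ≤ Real.sqrt b := by
      have := Real.sqrt_le_sqrt htb
      rwa [Real.sqrt_sq ht0] at this
    have hsqb : Real.sqrt b * Real.sqrt b = b := Real.mul_self_sqrt hb0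
    have h2var : ∑ z, ν z * (Real.sqrt (f z) - Real.sqrt b)^2
        ≤ 2 * ∑ z, ν z * (Real.sqrt (f z) - t)^2 := by
      rw [expand (Real.sqrt b), expand t, ← hb]
      nlinarith [htsb, ht0, hsqb, htb, mul_le_mul_of_nonneg_left htsb ht0]
    calc ent ν f ≤ K * ∑ z, ν z * (Real.sqrt (f z) - Real.sqrt b)^2 := hbd
      _ ≤ K * (2 * ∑ z, ν z * (Real.sqrt (f z) - t)^2) :=
          mul_le_mul_of_nonneg_left h2var hK0
      _ = 2 * K * ∑ z, ν z * (Real.sqrt (f z) - t)^2 := by ring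

/-- Two points in the same block, both of measure ≥ π₀, have close `H`-values. -/
lemma cross_block {Ω γ : Type*} [Fintype Ω] (ν H : Ω → ℝ) (g : Ω → γ) (π₀ : ℝ)
    (hπ : 0 < π₀) (hν0 : ∀ z, 0 ≤ ν z) (x y : Ω)
    (hx : π₀ ≤ ν x) (hy : π₀ ≤ ν y) (hgxy : g x = g y) :
    (H x - H y)^2 ≤ 4/π₀ * ∑ z, ν z * (H z - condMean ν g H z)^2 := by
  set D := ∑ z, ν z * (H z - condMean ν g H z)^2 with hD
  have hsingle : ∀ w : Ω, ν w * (H w - condMean ν g H w)^2 ≤ D := by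
    intro w
    exact Finset.single_le_sum (f := fun z => ν z * (H z - condMean ν g H z)^2)
      (fun z _ => mul_nonneg (hν0 z) (sq_nonneg _)) (Finset.mem_univ w)
  have hM : condMean ν g H x = condMean ν g H y := by
    unfold condMean
    rw [hgxy]
  have hax : (H x - condMean ν g H x)^2 ≤ D / π₀ := by
    rw [le_div_iff₀ hπ]
    nlinarith [hsingle x, sq_nonneg (H x - condMean ν g H x), hx]
  have hay : (H y - condMean ν g H y)^2 ≤ D / π₀ := by
    rw [le_div_iff₀ hπ]
    nlinarith [hsingle y, sq_nonneg (H y - condMean ν g H y), hy]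
  rw [hM] at hax
  have hdiv : 4/π₀ * D = 4 * (D/π₀) := by ring
  rw [hdiv]
  nlinarith [hax, hay, sq_nonneg (H x + H y - 2 * condMean ν g H y)]

/-- Two-block variance bound via connectivity through a "retraction" `r` and base point `z₀`. -/
lemma var_le_blocks {Ω α β : Type*} [Fintype Ω] [Fintype α] [Fintype β]
    (ν H : Ω → ℝ) (g₁ : Ω → α) (g₂ : Ω → β) (π₀ : ℝ) (hπ : 0 < π₀)
    (hν0 : ∀ z, 0 ≤ ν z) (hν1 : ∑ z, ν z = 1)
    (hsupp : ∀ z, ν z = 0 ∨ π₀ ≤ ν z)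
    (r : Ω → Ω) (z₀ : Ω)
    (hr1 : ∀ z, g₁ (r z) = g₁ z) (hr2 : ∀ z, g₂ (r z) = g₂ z₀)
    (hrs : ∀ z, π₀ ≤ ν (r z)) (hz0 : π₀ ≤ ν z₀) :
    ∑ z, ν z * (H z - ∑ w, ν w * H w)^2 ≤
      8/π₀ * ((∑ z, ν z * (H z - condMean ν g₁ H z)^2)
        + ∑ z, ν z * (H z - condMean ν g₂ H z)^2) := by
  set t := ∑ w, ν w * H w with htdef
  set D₁ := ∑ z, ν z * (H z - condMean ν g₁ H z)^2 with hD₁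
  set D₂ := ∑ z, ν z * (H z - condMean ν g₂ H z)^2 with hD₂
  have hD₁0 : 0 ≤ D₁ := Finset.sum_nonneg (fun z _ => mul_nonneg (hν0 z) (sq_nonneg _))
  have hD₂0 : 0 ≤ D₂ := Finset.sum_nonneg (fun z _ => mul_nonneg (hν0 z) (sq_nonneg _))
  set c := H z₀ with hc
  have expand : ∀ c' : ℝ, ∑ z, ν z * (H z - c')^2
      = (∑ z, ν z * (H z)^2) - 2*c'*t + c'^2 := by
    intro c'
    have e1 : ∀ z ∈ Finset.univ, ν z * (H z - c')^2
        = ν z * (H z)^2 - (2*c') * (ν z * H z) + c'^2 * ν z := fun z _ => by ring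
    rw [Finset.sum_congr rfl e1, Finset.sum_add_distrib, Finset.sum_sub_distrib,
      ← Finset.mul_sum, ← Finset.mul_sum, hν1, ← htdef]
    ring
  have step1 : ∑ z, ν z * (H z - t)^2 ≤ ∑ z, ν z * (H z - c)^2 := by
    rw [expand t, expand c]
    nlinarith [sq_nonneg (c - t)]
  have step2 : ∑ z, ν z * (H z - c)^2 ≤ ∑ z, ν z * (8/π₀ * (D₁ + D₂)) := by
    apply Finset.sum_le_sum
    intro z _
    rcases hsupp z with h0 | hνz
    · rw [h0, zero_mul, zero_mul]
    · have h1 : (H z - H (r z))^2 ≤ 4/π₀ * D₁ :=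
        cross_block ν H g₁ π₀ hπ hν0 z (r z) hνz (hrs z) (hr1 z).symm
      have h2 : (H (r z) - c)^2 ≤ 4/π₀ * D₂ :=
        cross_block ν H g₂ π₀ hπ hν0 (r z) z₀ (hrs z) hz0 (hr2 z)
      have h3 : (H z - c)^2 ≤ 8/π₀ * (D₁ + D₂) := by
        have e : 8/π₀ * (D₁ + D₂) = 2*(4/π₀*D₁) + 2*(4/π₀*D₂) := by ring
        rw [e]
        nlinarith [h1, h2, sq_nonneg (H z + c - 2 * H (r z))]
      exact mul_le_mul_of_nonneg_left h3 (hν0 z)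
  have step3 : ∑ z, ν z * (8/π₀ * (D₁ + D₂)) = 8/π₀ * (D₁ + D₂) := by
    rw [← Finset.sum_mul, hν1, one_mul]
  linarith [step1, step2, step3.le]

/-- Local spin/edge factorization at a single site: there is `δ₁ > 0`, depending only on
`q`, `p` and the degree `d`, such that for every fixed neighborhood spin configuration
`τ` and every nonnegative `f` on `[q] × {0,1}^d`,
`ν_x[Ent_x(f|σ)|σ_O] + ν_x[Ent_x(f|σ_O,A)|σ_O] ≥ δ₁ Ent_x(f|σ_O)`. -/
theorem stmt19 (q d : ℕ) (hq : 2 ≤ q) (p : ℝ) (hp0 : 0 < p) (hp1 : p < 1) :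
    ∃ δ₁ : ℝ, 0 < δ₁ ∧
      ∀ (τ : Fin d → Fin q) (f : Fin q × (Fin d → Bool) → ℝ), (∀ z, 0 ≤ f z) →
        δ₁ * ent (siteMeasure q d p τ) f ≤
          avgCondEnt (siteMeasure q d p τ) Prod.fst f +
          avgCondEnt (siteMeasure q d p τ) Prod.snd f := by
  classical
  have hq0 : 0 < q := by omega
  have hp1' : (0:ℝ) < 1 - p := by linarith
  set m : ℝ := min p (1 - p) with hmdef
  have hm0 : 0 < m := lt_min hp0 hp1'
  have hm1 : m ≤ 1 := le_trans (min_le_left _ _) hp1.le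
  set w₀ : ℝ := ((1-p)*m)^d with hw₀def
  have hw₀ : 0 < w₀ := pow_pos (mul_pos hp1' hm0) d
  set N : ℝ := (q : ℝ) * 2^d with hNdef
  have hN : 0 < N := by positivity
  set π₀ : ℝ := w₀ / N with hπ₀def
  have hπ₀ : 0 < π₀ := div_pos hw₀ hN
  set K : ℝ := 2 * (1 + 1/Real.sqrt π₀)^2 * (8/π₀) with hKdef
  have hK : 0 < K := by positivity
  refine ⟨1/K, by positivity, ?_⟩
  intro τ f hf
  set ν := siteMeasure q d p τ with hν
  set W := siteWeight q d p τ with hWdef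
  -- basic weight facts
  have hW0 : ∀ z, 0 ≤ W z := by
    intro z
    apply mul_nonneg (pow_nonneg hp1'.le _)
    apply Finset.prod_nonneg
    intro i _
    split_ifs <;> linarith
  have hW1 : ∀ z, W z ≤ 1 := by
    intro z
    have h1 : (1 - p) ^ (Finset.univ.filter (fun i => τ i ≠ z.1)).card ≤ 1 :=
      pow_le_one₀ hp1'.le (by linarith)
    have h2 : (∏ i, (if τ i = z.1 then (if z.2 i then p else 1 - p)
        else (if z.2 i then 0 else 1))) ≤ 1 := by
      apply Finset.prod_le_one
      · intro i _; split_ifs <;> linarith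
      · intro i _; split_ifs <;> linarith
    have h0 : 0 ≤ ∏ i, (if τ i = z.1 then (if z.2 i then p else 1 - p)
        else (if z.2 i then 0 else 1)) := by
      apply Finset.prod_nonneg; intro i _; split_ifs <;> linarith
    calc W z = (1 - p) ^ (Finset.univ.filter (fun i => τ i ≠ z.1)).card *
        ∏ i, (if τ i = z.1 then (if z.2 i then p else 1 - p)
          else (if z.2 i then 0 else 1)) := rfl
      _ ≤ 1 * 1 := mul_le_mul h1 h2 h0 zero_le_one
      _ = 1 := by ring
  have hWsupp : ∀ z : Fin q × (Fin d → Bool),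
      (∀ i, z.2 i = true → τ i = z.1) → w₀ ≤ W z := by
    intro z hz
    have hk : (Finset.univ.filter (fun i => τ i ≠ z.1)).card ≤ d := by
      calc (Finset.univ.filter (fun i => τ i ≠ z.1)).card
          ≤ (Finset.univ : Finset (Fin d)).card := Finset.card_filter_le _ _
        _ = d := by simp
    have h1 : (1-p)^d ≤ (1 - p) ^ (Finset.univ.filter (fun i => τ i ≠ z.1)).card :=
      pow_le_pow_of_le_one hp1'.le (by linarith) hk
    have h2 : m^d ≤ ∏ i, (if τ i = z.1 then (if z.2 i then p else 1 - p)
        else (if z.2 i then 0 else 1)) := by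
      have : m^d = ∏ _i : Fin d, m := by simp
      rw [this]
      apply Finset.prod_le_prod
      · intro i _; exact hm0.le
      · intro i _
        by_cases hti : τ i = z.1
        · simp only [hti, if_true]
          split_ifs
          · exact min_le_left _ _
          · exact min_le_right _ _
        · simp only [hti, if_false]
          split_ifs with h2i
          · exact absurd (hz i h2i) hti
          · exact hm1
    calc w₀ = (1-p)^d * m^d := by rw [hw₀def, mul_pow]
      _ ≤ _ := mul_le_mul h1 h2 (pow_nonneg hm0.le _) (pow_nonneg hp1'.le _)
  have hWzero : ∀ z : Fin q × (Fin d → Bool),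
      ¬(∀ i, z.2 i = true → τ i = z.1) → W z = 0 := by
    intro z hz
    push_neg at hz
    obtain ⟨i, hi2, hiτ⟩ := hz
    have : (∏ j, (if τ j = z.1 then (if z.2 j then p else 1 - p)
        else (if z.2 j then 0 else 1))) = 0 := by
      apply Finset.prod_eq_zero (Finset.mem_univ i)
      simp [hiτ, hi2]
    rw [hWdef]
    unfold siteWeight
    rw [this, mul_zero]
  set Z := ∑ w : Fin q × (Fin d → Bool), W w with hZdef
  have hZpos : 0 < Z := by
    apply Finset.sum_pos' (fun z _ => hW0 z)
    refine ⟨(⟨0, hq0⟩, fun _ => false), Finset.mem_univ _, ?_⟩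
    exact lt_of_lt_of_le hw₀ (hWsupp _ (fun i hi => by simp at hi))
  have hZN : Z ≤ N := by
    calc Z ≤ ∑ _z : Fin q × (Fin d → Bool), (1:ℝ) :=
          Finset.sum_le_sum (fun z _ => hW1 z)
      _ = (Fintype.card (Fin q × (Fin d → Bool)) : ℝ) := by
          rw [Finset.sum_const, Finset.card_univ, nsmul_eq_mul, mul_one]
      _ = N := by
          rw [Fintype.card_prod, Fintype.card_fun, Fintype.card_fin, Fintype.card_fin,
            Fintype.card_bool, hNdef]
          push_cast
          ring
  have hνeq : ∀ z, ν z = W z / Z := fun z => rfl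
  have hν0 : ∀ z, 0 ≤ ν z := fun z => div_nonneg (hW0 z) hZpos.le
  have hν1 : ∑ z, ν z = 1 := by
    rw [show (fun z => ν z) = fun z => W z / Z from rfl]
    rw [← Finset.sum_div, ← hZdef, div_self hZpos.ne']
  have hsupp' : ∀ z : Fin q × (Fin d → Bool),
      (∀ i, z.2 i = true → τ i = z.1) → π₀ ≤ ν z := by
    intro z hz
    rw [hνeq z, hπ₀def]
    exact div_le_div₀ (hW0 z) (hWsupp z hz) hZpos hZN
  have hsupp : ∀ z, ν z = 0 ∨ π₀ ≤ ν z := by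
    intro z
    by_cases h : ∀ i, z.2 i = true → τ i = z.1
    · exact Or.inr (hsupp' z h)
    · left
      rw [hνeq z, hWzero z h, zero_div]
  -- the connectivity data
  set r : Fin q × (Fin d → Bool) → Fin q × (Fin d → Bool) :=
    fun z => (z.1, fun _ => false) with hrdef
  set z₀ : Fin q × (Fin d → Bool) := (⟨0, hq0⟩, fun _ => false) with hz₀def
  have hrs : ∀ z, π₀ ≤ ν (r z) := fun z =>
    hsupp' (r z) (fun i hi => by simp [hrdef] at hi)
  have hz0 : π₀ ≤ ν z₀ := hsupp' z₀ (fun i hi => by simp [hz₀def] at hi)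
  -- assemble
  set A₁ := avgCondEnt ν Prod.fst f with hA₁
  set A₂ := avgCondEnt ν Prod.snd f with hA₂
  have c1 := ent_le_var ν f π₀ hπ₀ hν0 hν1 hsupp hf
  have c2 := var_le_blocks ν (fun z => Real.sqrt (f z)) Prod.fst Prod.snd π₀ hπ₀
    hν0 hν1 hsupp r z₀ (fun z => rfl) (fun z => rfl) hrs hz0
  have c3 : ∑ z, ν z * (Real.sqrt (f z)
      - condMean ν Prod.fst (fun z => Real.sqrt (f z)) z)^2 ≤ A₁ :=
    avgCondEnt_ge ν f Prod.fst hν0 hf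
  have c4 : ∑ z, ν z * (Real.sqrt (f z)
      - condMean ν Prod.snd (fun z => Real.sqrt (f z)) z)^2 ≤ A₂ :=
    avgCondEnt_ge ν f Prod.snd hν0 hf
  have hC₁ : (0:ℝ) ≤ 2 * (1 + 1/Real.sqrt π₀)^2 := by positivity
  have h8 : (0:ℝ) ≤ 8/π₀ := by positivity
  have main : ent ν f ≤ K * (A₁ + A₂) := by
    calc ent ν f ≤ 2 * (1 + 1/Real.sqrt π₀)^2 *
          ∑ z, ν z * (Real.sqrt (f z) - ∑ w, ν w * Real.sqrt (f w))^2 := c1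
      _ ≤ 2 * (1 + 1/Real.sqrt π₀)^2 * (8/π₀ *
          ((∑ z, ν z * (Real.sqrt (f z)
            - condMean ν Prod.fst (fun z => Real.sqrt (f z)) z)^2)
          + ∑ z, ν z * (Real.sqrt (f z)
            - condMean ν Prod.snd (fun z => Real.sqrt (f z)) z)^2)) :=
          mul_le_mul_of_nonneg_left c2 hC₁
      _ ≤ 2 * (1 + 1/Real.sqrt π₀)^2 * (8/π₀ * (A₁ + A₂)) := by
          apply mul_le_mul_of_nonneg_left _ hC₁
          exact mul_le_mul_of_nonneg_left (add_le_add c3 c4) h8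
      _ = K * (A₁ + A₂) := by rw [hKdef]; ring
  calc 1/K * ent ν f ≤ 1/K * (K * (A₁ + A₂)) :=
        mul_le_mul_of_nonneg_left main (by positivity)
    _ = A₁ + A₂ := by field_simp
end
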